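/- arXiv:0908.3923 — 7 statements merged into one kernel-verified Lean document; each statement's English description precedes it below -/
import Mathlib

section
/- For every choice of parameters V_dagger < 0, V_alpha < V_dagger, and C > 0, there exists a unique g > 0 solving the dispersion relation C²(1 − 2V_alpha) = s₀ · I'_{C²}(s₀)/I_{C²}(s₀), where s₀ = 2C√g · (1 − V_dagger/V_alpha)^{1/(2C²)}. (Proposition 1 of the paper.) -/
/-!
Write `I_ν(x) = (x/2)^ν f(x²/4)` with `f t = ∑ c k * t ^ k`, `c k = 1 / (k! Γ(k + ν + 1)) > 0`.
Then `x I_ν'(x) / I_ν(x) = ν + 2 t f'(t) / f(t)` at `t = x² / 4`, and `t f'(t) / f(t)` is the mean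
of `k` under the weights `c k * t ^ k` (`seriesMean`). This mean is continuous on `[0, ∞)`, vanishes
at `0`, is unbounded, and is strictly increasing by Chebyshev's sum inequality, so it takes the
value `-V_α C² > 0` exactly once, and `g` is read off from `s₀² / 4 = C² (1 - V†/V_α)^(1/C²) g`.
-/

noncomputable def besselI (ν x : ℝ) : ℝ :=
  ∑' k : ℕ, (x / 2) ^ (2 * (k : ℝ) + ν) / ((k.factorial : ℝ) * Real.Gamma ((k : ℝ) + ν + 1))

open Real Filter Set Topology

noncomputable def seriesMean (c : ℕ → ℝ) (t : ℝ) : ℝ :=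
  (∑' k : ℕ, k * c k * t ^ k) / ∑' k : ℕ, c k * t ^ k

section NonnegCoeff

variable {c : ℕ → ℝ}

theorem summable_pow_mul_coeff_mul_pow (hc : ∀ k, 0 ≤ c k)
    (hs : ∀ r, 0 ≤ r → Summable fun k => c k * r ^ k) (m : ℕ) {r : ℝ} (hr : 0 ≤ r) :
    Summable fun k : ℕ => (k : ℝ) ^ m * c k * r ^ k := by
  have hgeom : Summable fun k : ℕ => (k : ℝ) ^ m * (1 / 2) ^ k :=
    summable_pow_mul_geometric_of_norm_lt_one m (by norm_num)
  refine .of_nonneg_of_le (fun k => mul_nonneg (mul_nonneg (by positivity) (hc k)) (by positivity))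
    (fun k => ?_) ((hs (2 * r) (by positivity)).mul_left (∑' j : ℕ, (j : ℝ) ^ m * (1 / 2) ^ j))
  have half : ((1 : ℝ) / 2) ^ k * 2 ^ k = 1 := by rw [← mul_pow]; norm_num
  calc (k : ℝ) ^ m * c k * r ^ k = ((k : ℝ) ^ m * (1 / 2) ^ k) * (c k * (2 * r) ^ k) := by
        linear_combination (-((k : ℝ) ^ m * c k * r ^ k)) * half
    _ ≤ _ := mul_le_mul_of_nonneg_right (hgeom.le_tsum k fun j _ => by positivity)
        (mul_nonneg (hc k) (by positivity))

theorem hasDerivAt_tsum_coeff_mul_pow (hc : ∀ k, 0 ≤ c k)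
    (hs : ∀ r, 0 ≤ r → Summable fun k => c k * r ^ k) (t : ℝ) :
    HasDerivAt (fun x => ∑' k : ℕ, c k * x ^ k) (∑' k : ℕ, c k * (k * t ^ (k - 1))) t := by
  set R := |t| + 1
  have hR : 1 ≤ R := le_add_of_nonneg_left (abs_nonneg t)
  refine hasDerivAt_tsum_of_isPreconnected (y₀ := 0) (u := fun k => k * c k * R ^ k)
    ((summable_pow_mul_coeff_mul_pow hc hs 1 (zero_le_one.trans hR)).congr fun k => by ring)
    Metric.isOpen_ball (convex_ball 0 R).isPreconnected
    (fun k y _ => (hasDerivAt_pow k y).const_mul (c k)) (fun k y hy => ?_)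
    (Metric.mem_ball_self (by linarith)) (hs 0 le_rfl) (by simp [R])
  have hyR : |y| ≤ R := by simpa [Real.dist_eq] using (Metric.mem_ball.1 hy).le
  rw [norm_mul, norm_mul, Real.norm_of_nonneg (hc k), Real.norm_natCast, norm_pow, Real.norm_eq_abs]
  calc c k * (k * |y| ^ (k - 1)) ≤ c k * (k * R ^ k) := by
        gcongr
        · exact hc k
        · exact (pow_le_pow_left₀ (abs_nonneg y) hyR _).trans
            (pow_le_pow_right₀ hR (Nat.sub_le k 1))
    _ = k * c k * R ^ k := by ring

theorem continuous_tsum_coeff_mul_pow (hc : ∀ k, 0 ≤ c k)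
    (hs : ∀ r, 0 ≤ r → Summable fun k => c k * r ^ k) :
    Continuous fun x => ∑' k : ℕ, c k * x ^ k :=
  continuous_iff_continuousAt.2 fun t => (hasDerivAt_tsum_coeff_mul_pow hc hs t).continuousAt

end NonnegCoeff

theorem mul_tsum_coeff_mul_pow_pred (c : ℕ → ℝ) (t : ℝ) :
    t * ∑' k : ℕ, c k * (k * t ^ (k - 1)) = ∑' k : ℕ, k * c k * t ^ k := by
  rw [← tsum_mul_left]
  congr 1
  ext (_ | k)
  · simp
  · simp only [Nat.add_sub_cancel, pow_succ]
    push_cast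
    ring

theorem seriesMean_zero (c : ℕ → ℝ) : seriesMean c 0 = 0 := by
  have : ∀ k : ℕ, (k : ℝ) * c k * 0 ^ k = 0 := by rintro (_ | k) <;> simp
  simp only [seriesMean, this, tsum_zero, zero_div]

section PosCoeff

variable {c : ℕ → ℝ}

theorem tsum_coeff_mul_pow_pos (hc : ∀ k, 0 < c k)
    (hs : ∀ r, 0 ≤ r → Summable fun k => c k * r ^ k) {t : ℝ} (ht : 0 ≤ t) :
    0 < ∑' k : ℕ, c k * t ^ k :=
  (hs t ht).tsum_pos (fun k => mul_nonneg (hc k).le (pow_nonneg ht k)) 0 (by simpa using hc 0)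

theorem pow_mul_pow_le_of_le {t₁ t₂ : ℝ} (h₁ : 0 ≤ t₁) (h₁₂ : t₁ ≤ t₂) {j k : ℕ} (hjk : j ≤ k) :
    t₂ ^ j * t₁ ^ k ≤ t₁ ^ j * t₂ ^ k := by
  obtain ⟨d, rfl⟩ := Nat.exists_eq_add_of_le hjk
  calc t₂ ^ j * t₁ ^ (j + d) = (t₁ ^ j * t₂ ^ j) * t₁ ^ d := by ring
    _ ≤ (t₁ ^ j * t₂ ^ j) * t₂ ^ d := by
        have := h₁.trans h₁₂
        gcongr
    _ = t₁ ^ j * t₂ ^ (j + d) := by ring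

theorem sub_mul_pow_mul_pow_sub_nonneg {t₁ t₂ : ℝ} (h₁ : 0 ≤ t₁) (h₁₂ : t₁ ≤ t₂) (j k : ℕ) :
    0 ≤ ((j : ℝ) - k) * (t₂ ^ j * t₁ ^ k - t₁ ^ j * t₂ ^ k) := by
  rcases le_total j k with hjk | hkj
  · exact mul_nonneg_of_nonpos_of_nonpos (by simpa using hjk)
      (sub_nonpos.2 (pow_mul_pow_le_of_le h₁ h₁₂ hjk))
  · have := pow_mul_pow_le_of_le h₁ h₁₂ hkj
    exact mul_nonneg (by simpa using hkj) (by linarith)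

/-- Chebyshev's sum inequality for the weights `c k * t ^ k`, proved by symmetrising the
Cauchy product over `(j, k) ↔ (k, j)`. -/
theorem tsum_mul_tsum_lt_tsum_mul_tsum (hc : ∀ k, 0 < c k)
    (hs : ∀ r, 0 ≤ r → Summable fun k => c k * r ^ k) {t₁ t₂ : ℝ} (h₁ : 0 < t₁) (h₁₂ : t₁ < t₂) :
    (∑' k : ℕ, k * c k * t₁ ^ k) * ∑' k : ℕ, c k * t₂ ^ k <
      (∑' k : ℕ, k * c k * t₂ ^ k) * ∑' k : ℕ, c k * t₁ ^ k := by
  have hN : ∀ t, 0 ≤ t → Summable fun k : ℕ => k * c k * t ^ k := fun t ht =>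
    (summable_pow_mul_coeff_mul_pow (fun k => (hc k).le) hs 1 ht).congr fun k => by ring
  have hprod : ∀ t t', 0 ≤ t → 0 ≤ t' →
      Summable (fun p : ℕ × ℕ => p.1 * c p.1 * t ^ p.1 * (c p.2 * t' ^ p.2)) ∧
      (∑' k : ℕ, k * c k * t ^ k) * ∑' k : ℕ, c k * t' ^ k =
        ∑' p : ℕ × ℕ, p.1 * c p.1 * t ^ p.1 * (c p.2 * t' ^ p.2) := fun t t' ht ht' => by
    have h := (hN t ht).mul_of_nonneg (hs t' ht')
      (fun k => mul_nonneg (mul_nonneg k.cast_nonneg (hc k).le) (pow_nonneg ht k))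
      (fun k => mul_nonneg (hc k).le (pow_nonneg ht' k))
    exact ⟨h, (hN t ht).tsum_mul_tsum (hs t' ht') h⟩
  obtain ⟨hs₂₁, he₂₁⟩ := hprod t₂ t₁ (h₁.trans h₁₂).le h₁.le
  obtain ⟨hs₁₂, he₁₂⟩ := hprod t₁ t₂ h₁.le (h₁.trans h₁₂).le
  set φ : ℕ × ℕ → ℝ := fun p =>
    p.1 * c p.1 * t₂ ^ p.1 * (c p.2 * t₁ ^ p.2) - p.1 * c p.1 * t₁ ^ p.1 * (c p.2 * t₂ ^ p.2)
  have hφ : Summable φ := hs₂₁.sub hs₁₂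
  have hφ' : Summable fun p : ℕ × ℕ => φ p.swap := hφ.prod_symm
  have hsym : ∀ p : ℕ × ℕ, φ p + φ p.swap =
      c p.1 * c p.2 * (((p.1 : ℝ) - p.2) * (t₂ ^ p.1 * t₁ ^ p.2 - t₁ ^ p.1 * t₂ ^ p.2)) := by
    intro p; simp only [φ, Prod.fst_swap, Prod.snd_swap]; ring
  have hpos : 0 < ∑' p, (φ p + φ p.swap) := by
    refine (hφ.add hφ').tsum_pos (fun p => ?_) (1, 0) ?_
    · rw [hsym]
      exact mul_nonneg (mul_pos (hc _) (hc _)).le (sub_mul_pow_mul_pow_sub_nonneg h₁.le h₁₂.le _ _)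
    · rw [hsym]
      simpa using mul_pos (mul_pos (hc 1) (hc 0)) (sub_pos.2 h₁₂)
  have hsum : ∑' p, (φ p + φ p.swap) = 2 * ∑' p, φ p := by
    have hswap : ∑' p : ℕ × ℕ, φ p.swap = ∑' p, φ p := (Equiv.prodComm ℕ ℕ).tsum_eq φ
    rw [hφ.tsum_add hφ', hswap, two_mul]
  rw [he₂₁, he₁₂, ← sub_pos, ← hs₂₁.tsum_sub hs₁₂]
  change 0 < ∑' p, φ p
  linarith

theorem seriesMean_strictMonoOn (hc : ∀ k, 0 < c k)
    (hs : ∀ r, 0 ≤ r → Summable fun k => c k * r ^ k) : StrictMonoOn (seriesMean c) (Ioi 0) :=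
  fun t₁ h₁ t₂ h₂ h₁₂ => by
    rw [seriesMean, seriesMean, div_lt_div_iff₀ (tsum_coeff_mul_pow_pos hc hs (le_of_lt h₁))
      (tsum_coeff_mul_pow_pos hc hs (le_of_lt h₂))]
    exact tsum_mul_tsum_lt_tsum_mul_tsum hc hs h₁ h₁₂

theorem continuousOn_seriesMean (hc : ∀ k, 0 < c k)
    (hs : ∀ r, 0 ≤ r → Summable fun k => c k * r ^ k) : ContinuousOn (seriesMean c) (Ici 0) := by
  have hN : Continuous fun t => ∑' k : ℕ, k * c k * t ^ k :=
    continuous_tsum_coeff_mul_pow (fun k => mul_nonneg k.cast_nonneg (hc k).le) fun r hr =>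
      (summable_pow_mul_coeff_mul_pow (fun k => (hc k).le) hs 1 hr).congr fun k => by ring
  exact hN.continuousOn.div (continuous_tsum_coeff_mul_pow (fun k => (hc k).le) hs).continuousOn
    fun t ht => (tsum_coeff_mul_pow_pos hc hs ht).ne'

theorem mul_sub_sum_range_le_tsum (hc : ∀ k, 0 ≤ c k)
    (hs : ∀ r, 0 ≤ r → Summable fun k => c k * r ^ k) (K : ℕ) {t : ℝ} (ht : 0 ≤ t) :
    K * (∑' k : ℕ, c k * t ^ k - ∑ k ∈ Finset.range K, c k * t ^ k) ≤
      ∑' k : ℕ, k * c k * t ^ k := by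
  have hN : Summable fun k : ℕ => k * c k * t ^ k :=
    (summable_pow_mul_coeff_mul_pow hc hs 1 ht).congr fun k => by ring
  have hterm : ∀ k, 0 ≤ c k * t ^ k := fun k => mul_nonneg (hc k) (pow_nonneg ht k)
  rw [← (hs t ht).sum_add_tsum_nat_add K, add_sub_cancel_left, ← hN.sum_add_tsum_nat_add K,
    ← tsum_mul_left]
  refine le_add_of_nonneg_of_le (Finset.sum_nonneg fun k _ => ?_)
    (((summable_nat_add_iff K).2 (hs t ht)).mul_left _ |>.tsum_le_tsum (fun i => ?_)
      ((summable_nat_add_iff K).2 hN))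
  · simpa [mul_assoc] using mul_nonneg k.cast_nonneg (hterm k)
  · have : (K : ℝ) ≤ (i + K : ℕ) := by exact_mod_cast K.le_add_left i
    simpa [mul_assoc] using mul_le_mul_of_nonneg_right this (hterm (i + K))

theorem exists_le_seriesMean (hc : ∀ k, 0 < c k)
    (hs : ∀ r, 0 ≤ r → Summable fun k => c k * r ^ k) (T : ℝ) :
    ∃ t, 0 < t ∧ T ≤ seriesMean c t := by
  obtain ⟨m, hm⟩ := exists_nat_ge (2 * T)
  set A := ∑ k ∈ Finset.range (m + 1), c k
  set t := max 1 (2 * A / c (m + 1))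
  have ht : 1 ≤ t := le_max_left _ _
  have ht0 : 0 < t := one_pos.trans_le ht
  have hf := tsum_coeff_mul_pow_pos hc hs ht0.le
  -- the terms of index `< m + 1` carry at most half of the sum once `t ≥ 2 A / c (m + 1)`
  have hhead : 2 * ∑ k ∈ Finset.range (m + 1), c k * t ^ k ≤ ∑' k : ℕ, c k * t ^ k := by
    have hA : ∑ k ∈ Finset.range (m + 1), c k * t ^ k ≤ A * t ^ m := by
      rw [Finset.sum_mul]
      exact Finset.sum_le_sum fun k hk => mul_le_mul_of_nonneg_left
        (pow_le_pow_right₀ ht (Nat.lt_succ_iff.1 (Finset.mem_range.1 hk))) (hc k).le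
    have hAt : 2 * A ≤ c (m + 1) * t := by
      rw [← div_le_iff₀' (hc _)]; exact le_max_right _ _
    calc 2 * ∑ k ∈ Finset.range (m + 1), c k * t ^ k ≤ 2 * A * t ^ m := by linarith
      _ ≤ c (m + 1) * t * t ^ m := by gcongr
      _ = c (m + 1) * t ^ (m + 1) := by ring
      _ ≤ ∑' k : ℕ, c k * t ^ k :=
        (hs t ht0.le).le_tsum (m + 1) fun k _ => mul_nonneg (hc k).le (pow_nonneg ht0.le k)
  have hmain := mul_sub_sum_range_le_tsum (fun k => (hc k).le) hs (m + 1) ht0.le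
  refine ⟨t, ht0, ?_⟩
  rw [seriesMean, le_div_iff₀ hf]
  push_cast at hmain
  nlinarith

theorem existsUnique_seriesMean_eq (hc : ∀ k, 0 < c k)
    (hs : ∀ r, 0 ≤ r → Summable fun k => c k * r ^ k) {T : ℝ} (hT : 0 < T) :
    ∃! t, 0 < t ∧ seriesMean c t = T := by
  obtain ⟨t₂, ht₂, hT₂⟩ := exists_le_seriesMean hc hs T
  obtain ⟨t, ⟨ht₀, -⟩, htT⟩ := intermediate_value_Icc ht₂.le
    ((continuousOn_seriesMean hc hs).mono Icc_subset_Ici_self)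
    ⟨(seriesMean_zero c).trans_le hT.le, hT₂⟩
  have ht : 0 < t := ht₀.lt_of_ne fun h => by rw [← h, seriesMean_zero] at htT; exact hT.ne htT
  exact ⟨t, ⟨ht, htT⟩, fun t' ⟨ht', ht'T⟩ =>
    (seriesMean_strictMonoOn hc hs).injOn ht' ht (ht'T.trans htT.symm)⟩

end PosCoeff

noncomputable def besselCoeff (ν : ℝ) (k : ℕ) : ℝ :=
  1 / ((k.factorial : ℝ) * Gamma ((k : ℝ) + ν + 1))

theorem besselCoeff_pos {ν : ℝ} (hν : -1 < ν) (k : ℕ) : 0 < besselCoeff ν k :=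
  one_div_pos.2 (mul_pos (by positivity) (Gamma_pos_of_pos (by linarith [k.cast_nonneg (α := ℝ)])))

theorem besselCoeff_succ {ν : ℝ} (hν : -1 < ν) (k : ℕ) :
    besselCoeff ν (k + 1) = besselCoeff ν k / ((k + 1) * (k + ν + 1)) := by
  have hk : (k : ℝ) + ν + 1 ≠ 0 := by linarith [k.cast_nonneg (α := ℝ)]
  rw [besselCoeff, besselCoeff, Nat.factorial_succ, Nat.cast_add_one,
    show (k : ℝ) + 1 + ν + 1 = ((k : ℝ) + ν + 1) + 1 by ring, Gamma_add_one hk]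
  push_cast
  field_simp

theorem summable_besselCoeff_mul_pow {ν : ℝ} (hν : -1 < ν) (r : ℝ) :
    Summable fun k => besselCoeff ν k * r ^ k := by
  rcases eq_or_ne r 0 with rfl | hr
  · exact summable_of_ne_finset_zero (s := {0}) fun k hk => by simp_all
  refine summable_of_ratio_test_tendsto_lt_one zero_lt_one
    (Eventually.of_forall fun k => mul_ne_zero (besselCoeff_pos hν k).ne' (pow_ne_zero k hr)) ?_
  have hratio : ∀ k : ℕ, ‖besselCoeff ν (k + 1) * r ^ (k + 1)‖ / ‖besselCoeff ν k * r ^ k‖ =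
      |r| / ((k + 1) * (k + ν + 1)) := by
    intro k
    have hck := besselCoeff_pos hν k
    have hk₁ : 0 < (k : ℝ) + 1 := k.cast_add_one_pos
    have hk₂ : 0 < (k : ℝ) + ν + 1 := by linarith
    rw [besselCoeff_succ hν]
    simp only [norm_mul, norm_div, norm_pow, Real.norm_eq_abs, abs_of_pos hck, abs_of_pos hk₁,
      abs_of_pos hk₂]
    field_simp
    ring
  simp only [hratio]
  refine tendsto_const_nhds.div_atTop (tendsto_atTop_mono (fun k => ?_)
    (tendsto_natCast_atTop_atTop.atTop_add (tendsto_const_nhds (x := ν + 1))))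
  nlinarith [k.cast_nonneg (α := ℝ)]

theorem besselI_eq_rpow_mul_tsum (ν : ℝ) {x : ℝ} (hx : 0 < x) :
    besselI ν x = (x / 2) ^ ν * ∑' k : ℕ, besselCoeff ν k * (x ^ 2 / 4) ^ k := by
  rw [besselI, ← tsum_mul_left]
  congr 1
  ext k
  have hpow : (x / 2) ^ (2 * (k : ℝ)) = (x ^ 2 / 4) ^ k := by
    rw [rpow_mul (by positivity), rpow_two, rpow_natCast]; ring
  rw [rpow_add (by positivity), hpow, besselCoeff]
  ring

theorem mul_deriv_besselI_div_besselI {ν : ℝ} (hν : -1 < ν) {s : ℝ} (hs : 0 < s) :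
    s * deriv (besselI ν) s / besselI ν s = ν + 2 * seriesMean (besselCoeff ν) (s ^ 2 / 4) := by
  have hc : ∀ k, 0 < besselCoeff ν k := besselCoeff_pos hν
  have hsc : ∀ r, 0 ≤ r → Summable fun k => besselCoeff ν k * r ^ k := fun r _ =>
    summable_besselCoeff_mul_pow hν r
  have hf := (hasDerivAt_tsum_coeff_mul_pow (fun k => (hc k).le) hsc (s ^ 2 / 4)).comp s
    (((hasDerivAt_pow 2 s).div_const 4).congr_deriv (by ring : (2 : ℕ) * s ^ (2 - 1) / 4 = s / 2))
  have hpow : HasDerivAt (fun x : ℝ => (x / 2) ^ ν) (ν * (s / 2) ^ (ν - 1) * (1 / 2)) s :=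
    (hasDerivAt_rpow_const (Or.inl (by positivity))).comp s ((hasDerivAt_id s).div_const 2)
  have hI := (hpow.mul hf).congr_of_eventuallyEq
    ((eventually_gt_nhds hs).mono fun x hx => besselI_eq_rpow_mul_tsum ν hx)
  have hft := tsum_coeff_mul_pow_pos hc hsc (by positivity : 0 ≤ s ^ 2 / 4)
  rw [hI.deriv, besselI_eq_rpow_mul_tsum ν hs, seriesMean, ← mul_tsum_coeff_mul_pow_pred,
    rpow_sub (by positivity), rpow_one, Function.comp_apply]
  field_simp
  ring

/-- Proposition 1: for every `V† < 0`, `Vα < V†` and `C > 0` there is a unique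
excitability `g > 0` solving the dispersion relation
`C²(1 − 2Vα) = s₀ I'_{C²}(s₀)/I_{C²}(s₀)`, `s₀ = 2C√g (1 − V†/Vα)^{1/(2C²)}`. -/
theorem dispersion_relation_unique_solution
    (Vdag Valpha C : ℝ) (hVd : Vdag < 0) (hVa : Valpha < Vdag) (hC : 0 < C) :
    ∃! g : ℝ, 0 < g ∧
      C ^ 2 * (1 - 2 * Valpha) =
        (2 * C * Real.sqrt g * (1 - Vdag / Valpha) ^ (1 / (2 * C ^ 2))) *
          deriv (besselI (C ^ 2))
            (2 * C * Real.sqrt g * (1 - Vdag / Valpha) ^ (1 / (2 * C ^ 2))) /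
          besselI (C ^ 2)
            (2 * C * Real.sqrt g * (1 - Vdag / Valpha) ^ (1 / (2 * C ^ 2))) := by
  have hν : -1 < C ^ 2 := by linarith [sq_nonneg C]
  have hB : 0 < (1 - Vdag / Valpha) ^ (1 / (2 * C ^ 2)) :=
    rpow_pos_of_pos (sub_pos.2 ((div_lt_one_of_neg (hVa.trans hVd)).2 hVa)) _
  set B := (1 - Vdag / Valpha) ^ (1 / (2 * C ^ 2))
  have hrel : ∀ g, 0 < g →
      (C ^ 2 * (1 - 2 * Valpha) =
        2 * C * √g * B * deriv (besselI (C ^ 2)) (2 * C * √g * B) / besselI (C ^ 2) (2 * C * √g * B)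
        ↔ seriesMean (besselCoeff (C ^ 2)) ((C * B) ^ 2 * g) = -Valpha * C ^ 2) := by
    intro g hg
    have hs : 0 < 2 * C * √g * B := by have := sqrt_pos.2 hg; positivity
    have hs4 : (2 * C * √g * B) ^ 2 / 4 = (C * B) ^ 2 * g := by
      rw [mul_pow, mul_pow, mul_pow, sq_sqrt hg.le]; ring
    rw [mul_deriv_besselI_div_besselI hν hs, hs4]
    constructor <;> intro h <;> linarith
  obtain ⟨t, ⟨ht, htT⟩, huniq⟩ := existsUnique_seriesMean_eq (besselCoeff_pos hν)
    (fun r _ => summable_besselCoeff_mul_pow hν r) (T := -Valpha * C ^ 2)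
    (mul_pos (neg_pos.2 (hVa.trans hVd)) (by positivity))
  have hCB : 0 < (C * B) ^ 2 := by positivity
  refine ⟨t / (C * B) ^ 2, ⟨by positivity, (hrel _ (by positivity)).2 ?_⟩, fun g ⟨hg, hgeq⟩ => ?_⟩
  · rwa [mul_div_cancel₀ _ hCB.ne']
  · rw [eq_div_iff hCB.ne', mul_comm]
    exact huniq _ ⟨by positivity, (hrel g hg).1 hgeq⟩
end

section
/- For every γ > 0 and p > 0 one has the upper bound p · I'_γ(p)/I_γ(p) ≤ (γ² + p²)^{1/2}. -/
open Real Nat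

theorem sq_tsum_mul_le_tsum_sq_mul_mul_tsum {ι : Type*} {w a : ι → ℝ} (ha : ∀ i, 0 ≤ a i)
    (h0 : Summable a) (h1 : Summable fun i ↦ w i * a i) (h2 : Summable fun i ↦ w i ^ 2 * a i) :
    (∑' i, w i * a i) ^ 2 ≤ (∑' i, w i ^ 2 * a i) * ∑' i, a i := by
  have hquad (t : ℝ) :
      0 ≤ (∑' i, a i) * (t * t) + (-2 * ∑' i, w i * a i) * t + ∑' i, w i ^ 2 * a i := by
    have hexp : ∑' i, (t - w i) ^ 2 * a i
        = ∑' i, ((t * t) * a i - (2 * t) * (w i * a i) + w i ^ 2 * a i) :=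
      tsum_congr fun i ↦ by ring
    rw [((h0.mul_left _).sub (h1.mul_left _)).tsum_add h2,
      (h0.mul_left _).tsum_sub (h1.mul_left _), tsum_mul_left, tsum_mul_left] at hexp
    have : 0 ≤ ∑' i, (t - w i) ^ 2 * a i := tsum_nonneg fun i ↦ mul_nonneg (sq_nonneg _) (ha i)
    linarith
  have := discrim_le_zero hquad
  rw [discrim] at this
  linarith

theorem Real.Gamma_add_one_mul_factorial_le {ν : ℝ} (hν : 0 ≤ ν) (k : ℕ) :
    Gamma (ν + 1) * k ! ≤ Gamma (k + ν + 1) := by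
  induction k with
  | zero => simp
  | succ n ih =>
    have hΓ : Gamma ((n + 1 : ℕ) + ν + 1) = (n + ν + 1) * Gamma (n + ν + 1) := by
      rw [← Gamma_add_one (by positivity)]; push_cast; ring_nf
    rw [hΓ, factorial_succ, cast_mul, cast_succ, mul_left_comm]
    gcongr
    linarith

theorem two_mul_add_le_mul_two_pow {ν : ℝ} (hν : 0 ≤ ν) (k : ℕ) :
    2 * (k : ℝ) + ν ≤ (ν + 2) * 2 ^ k := by
  induction k with
  | zero => simp
  | succ n ih =>
    have : (1 : ℝ) ≤ 2 ^ n := one_le_pow₀ one_le_two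
    push_cast
    rw [pow_succ]
    nlinarith

theorem summable_pow_mul_pow_div_factorial_mul_Gamma {ν : ℝ} (hν : 0 ≤ ν) (m : ℕ) (r : ℝ) :
    Summable fun k : ℕ ↦ (2 * (k : ℝ) + ν) ^ m * r ^ k / (k ! * Gamma (k + ν + 1)) := by
  have hΓ : 0 < Gamma (ν + 1) := Gamma_pos_of_pos (by positivity)
  refine .of_norm_bounded
    ((summable_pow_div_factorial (2 ^ m * |r|)).mul_left ((ν + 2) ^ m / Gamma (ν + 1))) fun k ↦ ?_
  have hw : (2 * (k : ℝ) + ν) ^ m ≤ (ν + 2) ^ m * (2 ^ m) ^ k := by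
    rw [← pow_mul, mul_comm m, pow_mul, ← mul_pow]
    exact pow_le_pow_left₀ (by positivity) (two_mul_add_le_mul_two_pow hν k) m
  rw [norm_div, norm_mul, norm_pow, norm_pow, norm_of_nonneg (by positivity : (0 : ℝ) ≤ 2 * k + ν),
    norm_of_nonneg (by positivity : (0 : ℝ) ≤ k ! * Gamma (k + ν + 1)), Real.norm_eq_abs]
  calc (2 * (k : ℝ) + ν) ^ m * |r| ^ k / (k ! * Gamma (k + ν + 1))
      ≤ (ν + 2) ^ m * (2 ^ m) ^ k * |r| ^ k / (k ! * (Gamma (ν + 1) * k !)) := by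
        gcongr
        exact Gamma_add_one_mul_factorial_le hν k
    _ ≤ (ν + 2) ^ m * (2 ^ m) ^ k * |r| ^ k / (1 * (Gamma (ν + 1) * k !)) := by
        gcongr; exact_mod_cast k.factorial_pos
    _ = (ν + 2) ^ m / Gamma (ν + 1) * ((2 ^ m * |r|) ^ k / k !) := by
        rw [mul_pow]; field_simp

noncomputable def besselITerm (ν x : ℝ) (k : ℕ) : ℝ :=
  (x / 2) ^ (2 * (k : ℝ) + ν) / (k ! * Gamma (k + ν + 1))

section

variable {ν x : ℝ}

theorem besselI_eq_tsum : besselI ν x = ∑' k, besselITerm ν x k := rfl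

theorem besselITerm_eq_mul_pow (hx : 0 < x) (k : ℕ) :
    besselITerm ν x k = (x / 2) ^ ν * (((x / 2) ^ 2) ^ k / (k ! * Gamma (k + ν + 1))) := by
  rw [besselITerm, rpow_add (by positivity), ← pow_mul, ← rpow_natCast]
  push_cast
  ring

theorem besselITerm_pos (hν : 0 ≤ ν) (hx : 0 < x) (k : ℕ) : 0 < besselITerm ν x k := by
  have := Gamma_pos_of_pos (by positivity : (0 : ℝ) < k + ν + 1)
  unfold besselITerm
  positivity

theorem besselITerm_le_of_le (hν : 0 ≤ ν) (hx : 0 ≤ x) {y : ℝ} (hxy : x ≤ y) (k : ℕ) :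
    besselITerm ν x k ≤ besselITerm ν y k := by
  have := Gamma_pos_of_pos (by positivity : (0 : ℝ) < k + ν + 1)
  unfold besselITerm
  gcongr

theorem besselITerm_succ (hν : 0 ≤ ν) (hx : 0 < x) (k : ℕ) :
    4 * (k + 1) * (k + ν + 1) * besselITerm ν x (k + 1) = x ^ 2 * besselITerm ν x k := by
  have hΓ : Gamma ((k + 1 : ℕ) + ν + 1) = (k + ν + 1) * Gamma (k + ν + 1) := by
    rw [← Gamma_add_one (by positivity)]; push_cast; ring_nf
  have := Gamma_pos_of_pos (by positivity : (0 : ℝ) < k + ν + 1)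
  simp only [besselITerm_eq_mul_pow hx, hΓ, factorial_succ, cast_mul]
  push_cast
  field_simp
  ring

theorem summable_pow_mul_besselITerm (hν : 0 ≤ ν) (hx : 0 < x) (m : ℕ) :
    Summable fun k : ℕ ↦ (2 * (k : ℝ) + ν) ^ m * besselITerm ν x k :=
  ((summable_pow_mul_pow_div_factorial_mul_Gamma hν m ((x / 2) ^ 2)).mul_left
    ((x / 2) ^ ν)).congr fun k ↦ by simp only [besselITerm_eq_mul_pow hx]; ring

theorem summable_besselITerm (hν : 0 ≤ ν) (hx : 0 < x) : Summable (besselITerm ν x) := by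
  simpa using summable_pow_mul_besselITerm hν hx 0

theorem hasDerivAt_besselITerm (hx : 0 < x) (k : ℕ) :
    HasDerivAt (fun y ↦ besselITerm ν y k) ((2 * k + ν) / x * besselITerm ν x k) x := by
  have h : HasDerivAt (fun y ↦ besselITerm ν y k)
      ((2 * k + ν) * (x / 2) ^ (2 * (k : ℝ) + ν - 1) * (1 / 2) / (k ! * Gamma (k + ν + 1))) x :=
    ((hasDerivAt_rpow_const (Or.inl (by positivity))).comp x
      ((hasDerivAt_id x).div_const 2)).div_const _
  refine h.congr_deriv ?_
  rw [besselITerm, rpow_sub_one (by positivity)]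
  field_simp

theorem besselI_pos (hν : 0 ≤ ν) (hx : 0 < x) : 0 < besselI ν x :=
  (summable_besselITerm hν hx).tsum_pos (fun k ↦ (besselITerm_pos hν hx k).le) 0
    (besselITerm_pos hν hx 0)

/-- The terms increase in `x`, so on `(x/2, 2x)` their derivatives are dominated by the values
at `2x`. -/
theorem hasDerivAt_besselI (hν : 0 ≤ ν) (hx : 0 < x) :
    HasDerivAt (besselI ν) (∑' k : ℕ, (2 * k + ν) / x * besselITerm ν x k) x := by
  have hmem : x ∈ Set.Ioo (x / 2) (2 * x) := ⟨by linarith, by linarith⟩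
  have hbound (k : ℕ) (y : ℝ) (hy : y ∈ Set.Ioo (x / 2) (2 * x)) :
      ‖(2 * k + ν) / y * besselITerm ν y k‖ ≤ (2 * k + ν) / (x / 2) * besselITerm ν (2 * x) k := by
    have hy0 : 0 < y := by linarith [hy.1]
    rw [norm_of_nonneg (mul_nonneg (by positivity) (besselITerm_pos hν hy0 k).le)]
    gcongr
    · exact (besselITerm_pos hν (by positivity) k).le
    · exact hy.1.le
    · exact besselITerm_le_of_le hν hy0.le hy.2.le k
  have hu : Summable fun k : ℕ ↦ (2 * k + ν) / (x / 2) * besselITerm ν (2 * x) k :=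
    ((summable_pow_mul_besselITerm (x := 2 * x) hν (by positivity) 1).mul_left (2 / x)).congr
      fun k ↦ by field_simp
  exact hasDerivAt_tsum_of_isPreconnected hu isOpen_Ioo isPreconnected_Ioo
    (fun k y hy ↦ hasDerivAt_besselITerm (by linarith [hy.1]) k) hbound hmem
    (summable_besselITerm hν hx) hmem

theorem mul_deriv_besselI (hν : 0 ≤ ν) (hx : 0 < x) :
    x * deriv (besselI ν) x = ∑' k : ℕ, (2 * k + ν) * besselITerm ν x k := by
  rw [(hasDerivAt_besselI hν hx).deriv, ← tsum_mul_left]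
  congr with k
  field_simp

/-- The modified Bessel equation `(x d/dx)² I_ν = (x² + ν²) I_ν`, read off termwise. -/
theorem tsum_sq_mul_besselITerm (hν : 0 ≤ ν) (hx : 0 < x) :
    ∑' k : ℕ, (2 * (k : ℝ) + ν) ^ 2 * besselITerm ν x k = (ν ^ 2 + x ^ 2) * besselI ν x := by
  have hS0 := summable_besselITerm hν hx
  have hS := (summable_pow_mul_besselITerm hν hx 2).sub (hS0.mul_left (ν ^ 2))
  have hq : Summable fun k : ℕ ↦ 4 * k * (k + ν) * besselITerm ν x k :=
    hS.congr fun k ↦ by ring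
  have hshift : ∑' k : ℕ, 4 * k * (k + ν) * besselITerm ν x k = x ^ 2 * besselI ν x := by
    rw [hq.tsum_eq_zero_add, besselI_eq_tsum, ← tsum_mul_left]
    simp only [cast_zero, mul_zero, zero_mul, zero_add, cast_succ]
    exact tsum_congr fun k ↦ by rw [← besselITerm_succ hν hx k]; ring
  calc ∑' k : ℕ, (2 * (k : ℝ) + ν) ^ 2 * besselITerm ν x k
      = ∑' k, (ν ^ 2 * besselITerm ν x k + 4 * k * (k + ν) * besselITerm ν x k) :=
        tsum_congr fun k ↦ by ring
    _ = (ν ^ 2 + x ^ 2) * besselI ν x := by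
        rw [(hS0.mul_left _).tsum_add hq, tsum_mul_left, hshift, besselI_eq_tsum]; ring

end

/-- Amos' bound: for `γ > 0`, `p > 0`, `p I'_γ(p)/I_γ(p) ≤ √(γ² + p²)`. -/
theorem besselI_logDeriv_upper_bound (γ p : ℝ) (hγ : 0 < γ) (hp : 0 < p) :
    p * deriv (besselI γ) p / besselI γ p ≤ Real.sqrt (γ ^ 2 + p ^ 2) := by
  have hI := besselI_pos hγ.le hp
  have hCS := sq_tsum_mul_le_tsum_sq_mul_mul_tsum (fun k ↦ (besselITerm_pos hγ.le hp k).le)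
    (summable_besselITerm hγ.le hp) (by simpa using summable_pow_mul_besselITerm hγ.le hp 1)
    (summable_pow_mul_besselITerm hγ.le hp 2)
  rw [tsum_sq_mul_besselITerm hγ.le hp, ← besselI_eq_tsum, ← mul_deriv_besselI hγ.le hp,
    mul_assoc, ← sq] at hCS
  rw [div_le_iff₀ hI, ← sqrt_sq hI.le, ← sqrt_mul (by positivity)]
  exact le_sqrt_of_sq_le hCS
end

section
/- Fix V_dagger < 0 and V_alpha < V_dagger, set L = ln(−V_alpha/(V_dagger − V_alpha)) and C* = √L. For every g > e · V_alpha(V_alpha − 1) · L, the equation H_lwr(C, V_alpha) = g has exactly two solutions C in (0, ∞), one lying in (0, C*) and one in (C*, ∞); for g = e · V_alpha(V_alpha − 1) · L it has exactly one solution, C = C*; and for 0 < g < e · V_alpha(V_alpha − 1) · L it has no solution. -/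
/-! Substituting `(-Vα/(V† - Vα))^(1/C²) = exp (L/C²)`, the function `H_lwr(·, Vα)` is
`C ↦ A C² exp (L/C²)` with `A = Vα(Vα - 1) > 0` and `L > 0`. Its derivative
`2 A C exp (L/C²) (1 - L/C²)` is negative on `(0, √L)` and positive on `(√L, ∞)`, and the
function tends to `+∞` both as `C → 0⁺` and as `C → ∞`. So it has a valley with minimum
value `e A L` at `C* = √L`, and every level above the minimum is attained exactly once on
each side of `C*`. -/

open Real Set Filter Topology

section Valley

variable {f : ℝ → ℝ} {a : ℝ}

theorem StrictAntiOn.existsUnique_mem_Ioo_eq (hanti : StrictAntiOn f (Ioc 0 a)) (ha : 0 < a)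
    (hcont : ContinuousOn f (Ioc 0 a)) (hlim : Tendsto f (𝓝[>] 0) atTop) {g : ℝ}
    (hg : f a < g) : ∃! x, x ∈ Ioo 0 a ∧ f x = g := by
  obtain ⟨x₀, hgx₀, hx₀⟩ := ((hlim.eventually_gt_atTop g).and (Ioo_mem_nhdsGT ha)).exists
  obtain ⟨x, hx, hfx⟩ := intermediate_value_Ioo' hx₀.2.le
    (hcont.mono (Icc_subset_Ioc hx₀.1 le_rfl)) ⟨hg, hgx₀⟩
  have hx0 : x ∈ Ioo 0 a := ⟨hx₀.1.trans hx.1, hx.2⟩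
  refine ⟨x, ⟨hx0, hfx⟩, fun y ⟨hy, hfy⟩ => ?_⟩
  exact hanti.injOn (Ioo_subset_Ioc_self hy) (Ioo_subset_Ioc_self hx0) (hfy.trans hfx.symm)

theorem StrictMonoOn.existsUnique_mem_Ioi_eq (hmono : StrictMonoOn f (Ici a))
    (hcont : ContinuousOn f (Ici a)) (hlim : Tendsto f atTop atTop) {g : ℝ}
    (hg : f a < g) : ∃! x, x ∈ Ioi a ∧ f x = g := by
  obtain ⟨x₁, hgx₁, hx₁⟩ := ((hlim.eventually_gt_atTop g).and (eventually_gt_atTop a)).exists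
  obtain ⟨x, hx, hfx⟩ := intermediate_value_Ioo hx₁.le
    (hcont.mono Icc_subset_Ici_self) ⟨hg, hgx₁⟩
  refine ⟨x, ⟨hx.1, hfx⟩, fun y ⟨hy, hfy⟩ => ?_⟩
  exact hmono.injOn (Ioi_subset_Ici_self hy) (Ioi_subset_Ici_self hx.1) (hfy.trans hfx.symm)

theorem lt_of_strictAntiOn_Ioc_of_strictMonoOn_Ici (hanti : StrictAntiOn f (Ioc 0 a))
    (hmono : StrictMonoOn f (Ici a)) (ha : 0 < a) ⦃x : ℝ⦄ (hx : 0 < x) (hxa : x ≠ a) :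
    f a < f x := by
  rcases hxa.lt_or_gt with h | h
  · exact hanti ⟨hx, h.le⟩ ⟨ha, le_rfl⟩ h
  · exact hmono (mem_Ici.2 le_rfl) h.le h

end Valley

/-- `H_lwr(C, Vα)` written as `A C² exp (L/C²)`. -/
noncomputable def hLwr (A L C : ℝ) : ℝ := A * C ^ 2 * exp (L / C ^ 2)

section hLwr

variable {A L : ℝ}

theorem hasDerivAt_hLwr {C : ℝ} (hC : C ≠ 0) :
    HasDerivAt (hLwr A L) (2 * A * C * exp (L / C ^ 2) * (1 - L / C ^ 2)) C := by
  have hquot := (hasDerivAt_const C L).fun_div (hasDerivAt_pow 2 C) (pow_ne_zero 2 hC)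
  refine (((hasDerivAt_pow 2 C).const_mul A).fun_mul hquot.exp).congr_deriv ?_
  field_simp
  ring

theorem continuousOn_hLwr {s : Set ℝ} (hs : ∀ C ∈ s, C ≠ 0) : ContinuousOn (hLwr A L) s :=
  fun C hC => (hasDerivAt_hLwr (hs C hC)).continuousAt.continuousWithinAt

theorem hLwr_sqrt (hL : 0 < L) : hLwr A L (√L) = exp 1 * A * L := by
  rw [hLwr, sq_sqrt hL.le, div_self hL.ne']
  ring

variable (hA : 0 < A)
include hA

theorem strictAntiOn_hLwr : StrictAntiOn (hLwr A L) (Ioc 0 √L) := by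
  refine strictAntiOn_of_deriv_neg (convex_Ioc 0 √L)
    (continuousOn_hLwr fun C hC => hC.1.ne') fun C hC => ?_
  rw [interior_Ioc] at hC
  obtain ⟨hC0, hCs⟩ := hC
  have hCL : 1 < L / C ^ 2 := (one_lt_div (by positivity)).2 ((lt_sqrt hC0.le).1 hCs)
  rw [(hasDerivAt_hLwr hC0.ne').deriv]
  exact mul_neg_of_pos_of_neg (by positivity) (by linarith)

theorem strictMonoOn_hLwr (hL : 0 < L) : StrictMonoOn (hLwr A L) (Ici √L) := by
  have hpos : ∀ C ∈ Ici √L, 0 < C := fun C hC => (sqrt_pos.2 hL).trans_le hC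
  refine strictMonoOn_of_deriv_pos (convex_Ici √L)
    (continuousOn_hLwr fun C hC => (hpos C hC).ne') fun C hC => ?_
  rw [interior_Ici] at hC
  have hC0 := hpos C (mem_Ici.2 hC.le)
  have hCL : L / C ^ 2 < 1 := (div_lt_one (by positivity)).2 ((sqrt_lt' hC0).1 hC)
  rw [(hasDerivAt_hLwr hC0.ne').deriv]
  exact mul_pos (by positivity) (by linarith)

theorem tendsto_hLwr_atTop (hL : 0 < L) : Tendsto (hLwr A L) atTop atTop := by
  refine tendsto_atTop_mono (fun C => ?_) ((tendsto_pow_atTop two_ne_zero).const_mul_atTop hA)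
  exact le_mul_of_one_le_right (by positivity) (one_le_exp (by positivity))

/-- As `C → 0⁺`, `hLwr A L C = A L · eᵘ / u` with `u = L / C² → ∞`. -/
theorem tendsto_hLwr_nhdsGT_zero (hL : 0 < L) : Tendsto (hLwr A L) (𝓝[>] 0) atTop := by
  have hu : Tendsto (fun C : ℝ => L * (C⁻¹) ^ 2) (𝓝[>] 0) atTop :=
    ((tendsto_pow_atTop two_ne_zero).comp tendsto_inv_nhdsGT_zero).const_mul_atTop hL
  refine (((tendsto_exp_div_pow_atTop 1).comp hu).const_mul_atTop (mul_pos hA hL)).congr' ?_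
  filter_upwards [self_mem_nhdsWithin] with C hC
  have : C ≠ 0 := ne_of_gt hC
  simp only [Function.comp, hLwr, pow_one]
  field_simp

end hLwr

/-- Fix `V† < 0`, `Vα < V†`, `L = ln(−Vα/(V† − Vα))`, `C* = √L`. For
`g > e·Vα(Vα − 1)·L` the equation `H_lwr(C, Vα) = g` has exactly two positive
solutions, one in `(0, C*)` and one in `(C*, ∞)`; for `g = e·Vα(Vα − 1)·L`
exactly one, `C = C*`; and for `0 < g < e·Vα(Vα − 1)·L` none. -/
theorem Hlwr_level_set_solutions
    (Vdag Valpha : ℝ) (hVd : Vdag < 0) (hVa : Valpha < Vdag)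
    (L : ℝ) (hL : L = Real.log (-Valpha / (Vdag - Valpha)))
    (Cs : ℝ) (hCs : Cs = Real.sqrt L)
    (H : ℝ → ℝ)
    (hH : ∀ C : ℝ, H C =
      Valpha * (Valpha - 1) * C ^ 2 * (-Valpha / (Vdag - Valpha)) ^ (1 / C ^ 2))
    (g : ℝ) :
    (Real.exp 1 * (Valpha * (Valpha - 1)) * L < g →
      (∃! C : ℝ, C ∈ Set.Ioo 0 Cs ∧ H C = g) ∧
      (∃! C : ℝ, C ∈ Set.Ioi Cs ∧ H C = g) ∧
      (∀ C : ℝ, 0 < C → H C = g → C ∈ Set.Ioo 0 Cs ∨ C ∈ Set.Ioi Cs)) ∧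
    (g = Real.exp 1 * (Valpha * (Valpha - 1)) * L →
      ∀ C : ℝ, 0 < C → (H C = g ↔ C = Cs)) ∧
    (0 < g → g < Real.exp 1 * (Valpha * (Valpha - 1)) * L →
      ∀ C : ℝ, 0 < C → H C ≠ g) := by
  have hA : 0 < Valpha * (Valpha - 1) := mul_pos_of_neg_of_neg (by linarith) (by linarith)
  have hbase : 1 < -Valpha / (Vdag - Valpha) := (one_lt_div (by linarith)).2 (by linarith)
  have hL0 : 0 < L := hL ▸ log_pos hbase
  have hHeq : H = hLwr (Valpha * (Valpha - 1)) L := funext fun C => by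
    rw [hH, hLwr, rpow_def_of_pos (one_pos.trans hbase), mul_one_div, ← hL]
  subst hHeq hCs
  have hmin := lt_of_strictAntiOn_Ioc_of_strictMonoOn_Ici (strictAntiOn_hLwr hA)
    (strictMonoOn_hLwr hA hL0) (sqrt_pos.2 hL0)
  rw [← hLwr_sqrt hL0]
  refine ⟨fun hg => ⟨?_, ?_, fun C hC hCg => ?_⟩, fun hg C hC => ⟨fun hCg => ?_, ?_⟩,
    fun _ hg C hC hCg => ?_⟩
  · exact (strictAntiOn_hLwr hA).existsUnique_mem_Ioo_eq (sqrt_pos.2 hL0)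
      (continuousOn_hLwr fun C hC => hC.1.ne') (tendsto_hLwr_nhdsGT_zero hA hL0) hg
  · exact (strictMonoOn_hLwr hA hL0).existsUnique_mem_Ioi_eq
      (continuousOn_hLwr fun C hC => ((sqrt_pos.2 hL0).trans_le hC).ne')
      (tendsto_hLwr_atTop hA hL0) hg
  · rcases lt_trichotomy C √L with h | rfl | h
    · exact Or.inl ⟨hC, h⟩
    · exact absurd hCg hg.ne
    · exact Or.inr h
  · by_contra hne
    exact (hmin hC hne).ne' (hCg.trans hg)
  · rintro rfl; exact hg.symm
  · rcases eq_or_ne C √L with rfl | hne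
    · exact hg.ne' hCg
    · exact (hg.trans (hmin hC hne)).ne' hCg
end

section
/- Fix V_dagger < 0. The function f(V_alpha) = ((V_dagger − V_alpha)(1 − 2V_alpha)/(−V_dagger(1 − V_alpha))) · ln(−V_alpha/(V_dagger − V_alpha)) is strictly decreasing on (−∞, V_dagger), satisfies f(V_alpha) → 2 as V_alpha → −∞ and f(V_alpha) → 0 as V_alpha → V_dagger⁻; consequently the equation f(V_alpha) = 1 has exactly one solution V_alpha in (−∞, V_dagger). -/
/-!
With `a = -V† > 0` and `u = V† - Vα > 0` the function factors as
`f = (1 - 2Vα)/(1 - Vα) · u log (1 + a/u) / a`. The first factor `2 - 1/(1 - Vα)` is positive,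
decreasing, and tends to `2` at `-∞`. The second equals `a · log (1 + t)/t` with `t = a/u`; by
concavity of `log` the secant slope `log (1 + t)/t` decreases in `t`, so the second factor
increases in `u`, i.e. decreases in `Vα`, and it tends to `a` as `u → ∞` and to `0` as `u → 0⁺`.
The root of `f = 1` then comes from the intermediate value theorem, and is unique by strict
monotonicity.
-/

open Real Filter Set Topology

theorem StrictAntiOn.existsUnique_eq_of_eventually_lt
    {α δ : Type*} [ConditionallyCompleteLinearOrder α] [TopologicalSpace α] [OrderTopology α]
    [DenselyOrdered α] [NoMinOrder α] [LinearOrder δ] [TopologicalSpace δ]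
    [OrderClosedTopology δ] {f : α → δ} {b : α} {c : δ} (hf : StrictAntiOn f (Iio b))
    (hcont : ContinuousOn f (Iio b)) (hbot : ∀ᶠ x in atBot, c < f x)
    (hleft : ∀ᶠ x in 𝓝[<] b, f x < c) :
    ∃! x, x < b ∧ f x = c := by
  obtain ⟨x₁, hx₁c, hx₁b⟩ := (hbot.and (eventually_lt_atBot b)).exists
  obtain ⟨x₂, hx₂c, hx₂b⟩ := (hleft.and self_mem_nhdsWithin).exists
  obtain ⟨x, hxb, hxc⟩ :=
    isPreconnected_Iio.intermediate_value hx₂b hx₁b hcont ⟨hx₂c.le, hx₁c.le⟩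
  exact ⟨x, ⟨hxb, hxc⟩, fun y hy => hf.injOn hy.1 hxb (hy.2.trans hxc.symm)⟩

theorem StrictAntiOn.mul_of_nonneg {α R : Type*} [Preorder α] [MulZeroClass R] [Preorder R]
    [PosMulStrictMono R] [MulPosMono R] {s : Set α} {f g : α → R}
    (hf : StrictAntiOn f s) (hg : StrictAntiOn g s) (hf₀ : ∀ x ∈ s, 0 ≤ f x)
    (hg₀ : ∀ x ∈ s, 0 ≤ g x) : StrictAntiOn (fun x => f x * g x) s :=
  fun _ hx _ hy hxy => mul_lt_mul'' (hf hx hy hxy) (hg hx hy hxy) (hf₀ _ hy) (hg₀ _ hy)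

theorem strictAntiOn_log_one_add_div_self :
    StrictAntiOn (fun t : ℝ => log (1 + t) / t) (Ioi 0) := by
  rintro s (hs : 0 < s) t (ht : 0 < t) hst
  have := strictConcaveOn_log_Ioi.secant_strict_mono (a := 1) (mem_Ioi.2 one_pos)
    (mem_Ioi.2 (by linarith : (0 : ℝ) < 1 + s)) (mem_Ioi.2 (by linarith : (0 : ℝ) < 1 + t))
    (by simpa using hs.ne') (by simpa using ht.ne') (by linarith)
  simpa using this

theorem strictMonoOn_mul_log_one_add_div {a : ℝ} (ha : 0 < a) :
    StrictMonoOn (fun u : ℝ => u * log (1 + a / u)) (Ioi 0) := by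
  have hslope (u : ℝ) (hu : 0 < u) : u * log (1 + a / u) = a * (log (1 + a / u) / (a / u)) := by
    field_simp
  rintro u (hu : 0 < u) w (hw : 0 < w) huw
  simp only [hslope u hu, hslope w hw]
  exact mul_lt_mul_of_pos_left (strictAntiOn_log_one_add_div_self (div_pos ha hw)
    (div_pos ha hu) (div_lt_div_of_pos_left ha hu huw)) ha

theorem tendsto_mul_log_one_add_div_nhdsGT_zero {a : ℝ} (ha : a ≠ 0) :
    Tendsto (fun u : ℝ => u * log (1 + a / u)) (𝓝[>] 0) (𝓝 0) := by
  have hlim : Tendsto (fun u : ℝ => u * log (u + a) - u * log u) (𝓝 0) (𝓝 0) := by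
    have h1 : ContinuousAt (fun u : ℝ => u * log (u + a)) 0 := by
      fun_prop (disch := simpa using ha)
    simpa using h1.tendsto.sub (continuous_mul_log.tendsto 0)
  refine (hlim.mono_left nhdsWithin_le_nhds).congr' ?_
  have : ∀ᶠ u in 𝓝 (0:ℝ), u + a ≠ 0 :=
    (continuous_id.add continuous_const).continuousAt.eventually_ne (by simpa using ha)
  filter_upwards [self_mem_nhdsWithin, nhdsWithin_le_nhds this] with u hu hua
  have hu : u ≠ 0 := ne_of_gt hu
  rw [← mul_sub, ← log_div hua hu, add_div, div_self hu, add_comm]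

theorem strictAntiOn_one_sub_two_mul_div_one_sub :
    StrictAntiOn (fun v : ℝ => (1 - 2 * v) / (1 - v)) (Iio 1) := by
  rintro v (hv : v < 1) w (hw : w < 1) hvw
  rw [div_lt_div_iff₀ (by linarith) (by linarith)]
  nlinarith

theorem tendsto_one_sub_two_mul_div_one_sub_atBot :
    Tendsto (fun v : ℝ => (1 - 2 * v) / (1 - v)) atBot (𝓝 2) := by
  have h : Tendsto (fun v : ℝ => 1 - v) atBot atTop :=
    tendsto_atTop_add_const_left _ _ tendsto_neg_atBot_atTop
  have := (h.inv_tendsto_atTop).const_sub 2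
  rw [sub_zero] at this
  refine this.congr' ?_
  filter_upwards [eventually_lt_atBot 1] with v hv
  have : 1 - v ≠ 0 := by linarith
  simp only [Pi.inv_apply]
  field_simp
  ring

noncomputable def factoredF (d v : ℝ) : ℝ :=
  (1 - 2 * v) / (1 - v) / -d * ((d - v) * log (1 + -d / (d - v)))

theorem eq_factoredF {d v : ℝ} (hvd : v ≠ d) (hv1 : v ≠ 1) :
    (d - v) * (1 - 2 * v) / (-d * (1 - v)) * log (-v / (d - v)) = factoredF d v := by
  have : d - v ≠ 0 := sub_ne_zero.2 hvd.symm
  have : 1 - v ≠ 0 := sub_ne_zero.2 hv1.symm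
  rw [factoredF, show -v / (d - v) = 1 + -d / (d - v) by field_simp; ring]
  field_simp

section

variable {d : ℝ}

theorem strictAntiOn_factoredF (hd : d < 0) : StrictAntiOn (factoredF d) (Iio d) := by
  have hd' : 0 < -d := neg_pos.2 hd
  have hr : StrictAntiOn (fun v : ℝ => (1 - 2 * v) / (1 - v) / -d) (Iio d) :=
    fun v hv w hw hvw => div_lt_div_of_pos_right (strictAntiOn_one_sub_two_mul_div_one_sub
      (Iio_subset_Iio (by linarith) hv) (Iio_subset_Iio (by linarith) hw) hvw) hd'
  have hg : StrictAntiOn (fun v => (d - v) * log (1 + -d / (d - v))) (Iio d) :=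
    (strictMonoOn_mul_log_one_add_div hd').comp_strictAntiOn
      (fun v _ w _ hvw => sub_lt_sub_left hvw d) (fun v (hv : v < d) => sub_pos.2 hv)
  refine hr.mul_of_nonneg hg (fun v (hv : v < d) => ?_) (fun v (hv : v < d) => ?_)
  · have : 0 ≤ 1 - 2 * v := by linarith
    have : 0 ≤ 1 - v := by linarith
    positivity
  · have : 0 < d - v := sub_pos.2 hv
    exact mul_nonneg this.le (log_nonneg (le_add_of_nonneg_right (by positivity)))

theorem continuousOn_factoredF (hd : d < 0) : ContinuousOn (factoredF d) (Iio d) := by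
  intro v (hv : v < d)
  have : d - v ≠ 0 := by linarith
  have : 1 - v ≠ 0 := by linarith
  have : 1 + -d / (d - v) ≠ 0 := by
    have : 0 < -d / (d - v) := div_pos (neg_pos.2 hd) (by linarith)
    linarith
  apply ContinuousAt.continuousWithinAt
  unfold factoredF
  fun_prop (disch := assumption)

theorem tendsto_factoredF_atBot (hd : d ≠ 0) : Tendsto (factoredF d) atBot (𝓝 2) := by
  have hu : Tendsto (fun v => d - v) atBot atTop :=
    tendsto_atTop_add_const_left _ _ tendsto_neg_atBot_atTop
  have := (tendsto_one_sub_two_mul_div_one_sub_atBot.div_const (-d)).mul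
    ((tendsto_mul_log_one_add_div_atTop (-d)).comp hu)
  rwa [div_mul_cancel₀ _ (neg_ne_zero.2 hd)] at this

theorem tendsto_factoredF_nhdsLT (hd : d < 0) : Tendsto (factoredF d) (𝓝[<] d) (𝓝 0) := by
  have hu : Tendsto (fun v => d - v) (𝓝[<] d) (𝓝[>] 0) := by
    refine tendsto_nhdsWithin_of_tendsto_nhds_of_eventually_within _ ?_ ?_
    · simpa using ((continuous_sub_left d).tendsto d).mono_left nhdsWithin_le_nhds
    · filter_upwards [self_mem_nhdsWithin] with v (hv : v < d) using sub_pos.2 hv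
  have hr : ContinuousAt (fun v : ℝ => (1 - 2 * v) / (1 - v) / -d) d := by
    have : 1 - d ≠ 0 := by linarith
    have : -d ≠ 0 := by linarith
    fun_prop (disch := assumption)
  have := (hr.tendsto.mono_left nhdsWithin_le_nhds).mul
    ((tendsto_mul_log_one_add_div_nhdsGT_zero (neg_ne_zero.2 hd.ne)).comp hu)
  rwa [mul_zero] at this

end

/-- Fix `V† < 0`. The function
`f(Vα) = ((V† − Vα)(1 − 2Vα)/(−V†(1 − Vα))) ln(−Vα/(V† − Vα))` is strictly
decreasing on `(−∞, V†)`, tends to `2` as `Vα → −∞` and to `0` as `Vα → V†⁻`;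
consequently `f(Vα) = 1` has exactly one solution in `(−∞, V†)`. -/
theorem f_strictAnti_limits_unique_root
    (Vdag : ℝ) (hVd : Vdag < 0)
    (f : ℝ → ℝ)
    (hf : ∀ v : ℝ, f v =
      ((Vdag - v) * (1 - 2 * v) / (-Vdag * (1 - v))) *
        Real.log (-v / (Vdag - v))) :
    StrictAntiOn f (Set.Iio Vdag) ∧
    Filter.Tendsto f Filter.atBot (nhds 2) ∧
    Filter.Tendsto f (nhdsWithin Vdag (Set.Iio Vdag)) (nhds 0) ∧
    (∃! v : ℝ, v < Vdag ∧ f v = 1) := by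
  have hfF : EqOn (factoredF Vdag) f (Iio Vdag) := fun v (hv : v < Vdag) =>
    ((hf v).trans (eq_factoredF hv.ne (by linarith : v < 1).ne)).symm
  have hanti : StrictAntiOn f (Iio Vdag) := (strictAntiOn_factoredF hVd).congr hfF
  have hbot : Tendsto f atBot (𝓝 2) :=
    (tendsto_factoredF_atBot hVd.ne).congr' (hfF.eventuallyEq_of_mem (Iio_mem_atBot Vdag))
  have hleft : Tendsto f (𝓝[<] Vdag) (𝓝 0) :=
    (tendsto_factoredF_nhdsLT hVd).congr' (hfF.eventuallyEq_of_mem self_mem_nhdsWithin)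
  exact ⟨hanti, hbot, hleft, hanti.existsUnique_eq_of_eventually_lt
    ((continuousOn_factoredF hVd).congr hfF.symm)
    (hbot.eventually (eventually_gt_nhds one_lt_two))
    (hleft.eventually (eventually_lt_nhds one_pos))⟩
end

section
/- Fix V_dagger < 0. The function H_lwr tends to infinity toward the boundary of its domain, in the sense that for every M > 0 there is a compact subset K of (0, ∞) × (−∞, V_dagger) such that H_lwr(C, V_alpha) > M for all (C, V_alpha) in the domain outside K; moreover H_lwr attains its global minimum on (0, ∞) × (−∞, V_dagger) at exactly one point (C**, V_alpha**). -/
/-!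
Write `t = C²` and `L = log (−V / (V† − V)) > 0`, so that `H = V (V − 1) t e^{L/t}`. Since
`t e^{L/t} ≥ e L` with equality only at `t = L`, and since `V` is recovered from `L` as
`V = V† / (1 − e^{−L})`, we get `H ≥ e F(L)` where `F(x) = V(x) (V(x) − 1) x` and
`V(x) = V† / (1 − e^{−x})`, with equality exactly on the curve `x ↦ (√x, V(x))`. Now
`F(x) = V†² x / (1 − e^{−x})² − V† x / (1 − e^{−x})` is strictly convex, so it has at most one
minimiser, and every minimiser of `H` is the point of the curve over a minimiser of `F`.
Properness comes from elementary lower bounds on `H` in each of the four directions towards the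
boundary of the domain; a minimiser then exists by compactness.
-/

open Real Set

lemma strictConvexOn_of_hasDerivAt2_pos {D : Set ℝ} (hD : Convex ℝ D) (hDo : IsOpen D)
    {f f' f'' : ℝ → ℝ} (hf : ∀ x ∈ D, HasDerivAt f (f' x) x)
    (hf' : ∀ x ∈ D, HasDerivAt f' (f'' x) x) (hf'' : ∀ x ∈ D, 0 < f'' x) :
    StrictConvexOn ℝ D f := by
  have hmono : StrictMonoOn f' D :=
    strictMonoOn_of_deriv_pos hD (fun x hx => (hf' x hx).continuousAt.continuousWithinAt)
      fun x hx => by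
        rw [hDo.interior_eq] at hx
        exact (hf' x hx).deriv ▸ hf'' x hx
  refine StrictMonoOn.strictConvexOn_of_deriv hD
    (fun x hx => (hf x hx).continuousAt.continuousWithinAt) ?_
  rw [hDo.interior_eq]
  exact hmono.congr fun x hx => (hf x hx).deriv.symm

lemma StrictConvexOn.const_mul {s : Set ℝ} {f : ℝ → ℝ} (hf : StrictConvexOn ℝ s f) {c : ℝ}
    (hc : 0 < c) : StrictConvexOn ℝ s (fun x => c * f x) := by
  refine ⟨hf.1, fun x hx y hy hxy a b ha hb hab => ?_⟩
  have := mul_lt_mul_of_pos_left (hf.2 hx hy hxy ha hb hab) hc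
  simp only [smul_eq_mul] at this ⊢
  linarith

lemma ContinuousOn.exists_isMinOn_of_le_off_compact {X α : Type*} [TopologicalSpace X]
    [LinearOrder α] [TopologicalSpace α] [ClosedIicTopology α] {f : X → α} {s K : Set X}
    {x₀ : X} (hf : ContinuousOn f s) (hx₀ : x₀ ∈ s) (hK : IsCompact K) (hKs : K ⊆ s)
    (hle : ∀ x ∈ s \ K, f x₀ ≤ f x) : ∃ x ∈ s, IsMinOn f s x := by
  obtain ⟨x, hxK, hmin⟩ := (hK.insert x₀).exists_isMinOn (insert_nonempty x₀ K)
    (hf.mono (insert_subset hx₀ hKs))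
  refine ⟨x, insert_subset hx₀ hKs hxK, fun y hy => ?_⟩
  by_cases hyK : y ∈ insert x₀ K
  · exact hmin hyK
  · exact (hmin (mem_insert x₀ K)).trans (hle y ⟨hy, fun h => hyK (mem_insert_of_mem x₀ h)⟩)

lemma exp_one_mul_lt_exp {s : ℝ} (hs : s ≠ 1) : exp 1 * s < exp s := by
  have := add_one_lt_exp (sub_ne_zero.2 hs)
  calc exp 1 * s < exp 1 * exp (s - 1) := by gcongr; linarith
    _ = exp s := by rw [← exp_add, add_sub_cancel]

lemma exp_one_mul_le_mul_exp_div {t : ℝ} (ht : 0 < t) (x : ℝ) :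
    exp 1 * x ≤ t * exp (x / t) := by
  have := mul_le_mul_of_nonneg_left (exp_one_mul_le_exp (x := x / t)) ht.le
  rwa [mul_left_comm, mul_div_cancel₀ x ht.ne'] at this

lemma exp_one_mul_lt_mul_exp_div {t x : ℝ} (ht : 0 < t) (hxt : x ≠ t) :
    exp 1 * x < t * exp (x / t) := by
  have hs : x / t ≠ 1 := fun h => hxt ((div_eq_one_iff_eq ht.ne').1 h)
  have := mul_lt_mul_of_pos_left (exp_one_mul_lt_exp hs) ht
  rwa [mul_left_comm, mul_div_cancel₀ x ht.ne'] at this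

lemma sq_le_two_mul_sq_mul_exp_div {t x : ℝ} (ht : 0 < t) (hx : 0 ≤ x) :
    x ^ 2 ≤ 2 * t ^ 2 * exp (x / t) := by
  have := pow_div_factorial_le_exp (x / t) (div_nonneg hx ht.le) 2
  rw [Nat.factorial_two, Nat.cast_two] at this
  calc x ^ 2 = 2 * t ^ 2 * ((x / t) ^ 2 / 2) := by field_simp
    _ ≤ 2 * t ^ 2 * exp (x / t) := by gcongr

lemma two_mul_one_sub_exp_neg_lt {x : ℝ} (hx : 0 < x) :
    2 * (1 - exp (-x)) < x * (1 + exp (-x)) := by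
  set r : ℝ → ℝ := fun y => y * (1 + exp (-y)) - 2 * (1 - exp (-y))
  have hr : ∀ y, HasDerivAt r (1 - (1 + y) * exp (-y)) y := fun y => by
    have he := (hasDerivAt_neg y).exp
    exact ((hasDerivAt_id' y).fun_mul (he.const_add 1)).fun_sub
      ((he.const_sub 1).const_mul 2) |>.congr_deriv (by ring)
  have hmono : StrictMonoOn r (Ici 0) := by
    refine strictMonoOn_of_deriv_pos (convex_Ici 0)
      (fun y _ => (hr y).continuousAt.continuousWithinAt) fun y hy => ?_
    rw [interior_Ici] at hy
    rw [(hr y).deriv, sub_pos, exp_neg, ← div_eq_mul_inv, div_lt_one (exp_pos _), add_comm]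
    exact add_one_lt_exp hy.ne'
  have := hmono self_mem_Ici hx.le hx
  norm_num [r] at this
  linarith

lemma one_sub_exp_neg_pos {x : ℝ} (hx : 0 < x) : 0 < 1 - exp (-x) :=
  sub_pos.2 (exp_lt_one_iff.2 (neg_lt_zero.2 hx))

lemma strictConvexOn_div_one_sub_exp_neg_pow {k : ℕ} (hk : 0 < k) :
    StrictConvexOn ℝ (Ioi 0) (fun x => x / (1 - exp (-x)) ^ k) := by
  have hu : ∀ x, HasDerivAt (fun y => 1 - exp (-y)) (exp (-x)) x := fun x => by
    simpa using ((hasDerivAt_neg x).exp).const_sub 1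
  refine strictConvexOn_of_hasDerivAt2_pos (convex_Ioi 0) isOpen_Ioi
    (f' := fun x => (1 - exp (-x) - k * (x * exp (-x))) / (1 - exp (-x)) ^ (k + 1))
    (f'' := fun x => k * exp (-x) * (x * (1 + k * exp (-x)) - 2 * (1 - exp (-x)))
      / (1 - exp (-x)) ^ (k + 2)) (fun x hx => ?_) (fun x hx => ?_) (fun x hx => ?_)
  all_goals have hu0 := one_sub_exp_neg_pos (mem_Ioi.1 hx)
  · refine ((hasDerivAt_id' x).fun_div ((hu x).fun_pow k)
      (pow_ne_zero k hu0.ne')).congr_deriv ?_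
    obtain ⟨m, rfl⟩ := Nat.exists_eq_add_of_lt hk
    simp only [zero_add, Nat.add_sub_cancel]
    field_simp
    push_cast
    ring
  · have hN := (hu x).fun_sub
      (((hasDerivAt_id' x).fun_mul (hasDerivAt_neg x).exp).const_mul (k : ℝ))
    refine (hN.fun_div ((hu x).fun_pow (k + 1)) (pow_ne_zero _ hu0.ne')).congr_deriv ?_
    simp only [Nat.add_sub_cancel]
    field_simp
    push_cast
    ring
  · have hk1 : (1 : ℝ) ≤ k := by exact_mod_cast hk
    have hle : x * (1 + exp (-x)) ≤ x * (1 + k * exp (-x)) := by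
      gcongr
      · exact (mem_Ioi.1 hx).le
      · exact le_mul_of_one_le_left (exp_pos _).le hk1
    have := two_mul_one_sub_exp_neg_lt (mem_Ioi.1 hx)
    have := exp_pos (-x)
    exact div_pos (mul_pos (by positivity) (by linarith)) (by positivity)

lemma mul_sub_one_pos_of_neg {V : ℝ} (hV : V < 0) : 0 < V * (V - 1) :=
  mul_pos_of_neg_of_neg hV (by linarith)

noncomputable def Hlwr (Vdag : ℝ) (p : ℝ × ℝ) : ℝ :=
  p.2 * (p.2 - 1) * p.1 ^ 2 * (-p.2 / (Vdag - p.2)) ^ (1 / p.1 ^ 2)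

/-- The exponent `L` of the paper. -/
noncomputable def logRatio (Vdag V : ℝ) : ℝ := log (-V / (Vdag - V))

noncomputable def valleyV (Vdag x : ℝ) : ℝ := Vdag / (1 - exp (-x))

noncomputable def valleyPoint (Vdag x : ℝ) : ℝ × ℝ := (√x, valleyV Vdag x)

noncomputable def valleyValue (Vdag x : ℝ) : ℝ := valleyV Vdag x * (valleyV Vdag x - 1) * x

lemma continuousOn_Hlwr (Vdag : ℝ) : ContinuousOn (Hlwr Vdag) (Ioi 0 ×ˢ Iio Vdag) := by
  rintro p ⟨hC, hV⟩
  have hC2 : p.1 ^ 2 ≠ 0 := pow_ne_zero 2 (ne_of_gt hC)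
  have hV' : Vdag - p.2 ≠ 0 := (sub_pos.2 hV).ne'
  refine ContinuousAt.continuousWithinAt ?_
  refine ContinuousAt.mul (by fun_prop) (ContinuousAt.rpow (by fun_prop (disch := exact hV'))
    (by fun_prop (disch := exact hC2)) (Or.inr (by simp only [one_div, inv_pos]; positivity)))

section

variable {Vdag V : ℝ}

lemma one_lt_neg_div_sub (hVd : Vdag < 0) (hV : V < Vdag) : 1 < -V / (Vdag - V) :=
  (one_lt_div (sub_pos.2 hV)).2 (by linarith)

lemma logRatio_pos (hVd : Vdag < 0) (hV : V < Vdag) : 0 < logRatio Vdag V :=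
  log_pos (one_lt_neg_div_sub hVd hV)

lemma mul_logRatio_le (hVd : Vdag < 0) (hV : V < Vdag) : V * logRatio Vdag V ≤ Vdag := by
  have hVneg : V < 0 := hV.trans hVd
  have h := one_sub_inv_le_log_of_pos (zero_lt_one.trans (one_lt_neg_div_sub hVd hV))
  have h1 : 1 - (-V / (Vdag - V))⁻¹ = Vdag / V := by field_simp [hVneg.ne]; ring
  rw [h1, div_le_iff_of_neg hVneg] at h
  rw [logRatio]; linarith

lemma valleyV_logRatio (hVd : Vdag < 0) (hV : V < Vdag) :
    valleyV Vdag (logRatio Vdag V) = V := by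
  have hVneg : V < 0 := hV.trans hVd
  rw [valleyV, logRatio, exp_neg, exp_log (zero_lt_one.trans (one_lt_neg_div_sub hVd hV)),
    inv_div]
  have : 1 - (Vdag - V) / -V = Vdag / V := by field_simp [hVneg.ne]; ring
  rw [this, div_div_cancel₀ hVd.ne]

lemma logRatio_valleyV (hVd : Vdag < 0) {x : ℝ} (hx : 0 < x) :
    logRatio Vdag (valleyV Vdag x) = x := by
  have hu := one_sub_exp_neg_pos hx
  have : -valleyV Vdag x / (Vdag - valleyV Vdag x) = exp x := by
    have := hVd.ne
    have := (exp_pos (-x)).ne'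
    rw [valleyV]
    field_simp
    linear_combination (by rw [← exp_add, neg_add_cancel, exp_zero] : exp (-x) * exp x = 1)
  rw [logRatio, this, log_exp]

lemma valleyV_lt (hVd : Vdag < 0) {x : ℝ} (hx : 0 < x) : valleyV Vdag x < Vdag := by
  have hu := one_sub_exp_neg_pos hx
  rw [valleyV, div_lt_iff₀ hu]
  nlinarith [exp_pos (-x)]

lemma lt_logRatio_of_valleyV_lt (hVd : Vdag < 0) {a : ℝ} (ha : 0 < a)
    (haV : valleyV Vdag a < V) (hV : V < Vdag) : a < logRatio Vdag V := by
  have hu := one_sub_exp_neg_pos ha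
  rw [valleyV, div_lt_iff₀ hu] at haV
  rw [logRatio, lt_log_iff_exp_lt (zero_lt_one.trans (one_lt_neg_div_sub hVd hV)),
    lt_div_iff₀ (sub_pos.2 hV)]
  have : exp a * exp (-a) = 1 := by rw [← exp_add, add_neg_cancel, exp_zero]
  nlinarith [exp_pos a]

lemma Hlwr_eq_mul_exp (hVd : Vdag < 0) {p : ℝ × ℝ} (hV : p.2 < Vdag) :
    Hlwr Vdag p = p.2 * (p.2 - 1) * p.1 ^ 2 * exp (logRatio Vdag p.2 / p.1 ^ 2) := by
  rw [Hlwr, rpow_def_of_pos (zero_lt_one.trans (one_lt_neg_div_sub hVd hV)), logRatio,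
    mul_one_div]

lemma valleyPoint_mem (hVd : Vdag < 0) {x : ℝ} (hx : 0 < x) :
    valleyPoint Vdag x ∈ Ioi 0 ×ˢ Iio Vdag :=
  ⟨sqrt_pos.2 hx, valleyV_lt hVd hx⟩

lemma Hlwr_valleyPoint (hVd : Vdag < 0) {x : ℝ} (hx : 0 < x) :
    Hlwr Vdag (valleyPoint Vdag x) = exp 1 * valleyValue Vdag x := by
  rw [Hlwr_eq_mul_exp hVd (valleyV_lt hVd hx)]
  simp only [valleyPoint, valleyValue, logRatio_valleyV hVd hx, sq_sqrt hx.le, div_self hx.ne']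
  ring

lemma exp_one_mul_valleyValue_logRatio_le_Hlwr (hVd : Vdag < 0) {p : ℝ × ℝ}
    (hp : p ∈ Ioi 0 ×ˢ Iio Vdag) :
    exp 1 * valleyValue Vdag (logRatio Vdag p.2) ≤ Hlwr Vdag p := by
  obtain ⟨hC, hV⟩ : 0 < p.1 ∧ p.2 < Vdag := hp
  have hA := mul_sub_one_pos_of_neg (hV.trans hVd)
  rw [Hlwr_eq_mul_exp hVd hV, valleyValue, valleyV_logRatio hVd hV]
  calc exp 1 * (p.2 * (p.2 - 1) * logRatio Vdag p.2)
      = p.2 * (p.2 - 1) * (exp 1 * logRatio Vdag p.2) := by ring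
    _ ≤ p.2 * (p.2 - 1) * (p.1 ^ 2 * exp (logRatio Vdag p.2 / p.1 ^ 2)) :=
      mul_le_mul_of_nonneg_left (exp_one_mul_le_mul_exp_div (pow_pos hC 2) _) hA.le
    _ = _ := by ring

lemma eq_valleyPoint_of_Hlwr_le (hVd : Vdag < 0) {p : ℝ × ℝ} (hp : p ∈ Ioi 0 ×ˢ Iio Vdag)
    (hle : Hlwr Vdag p ≤ exp 1 * valleyValue Vdag (logRatio Vdag p.2)) :
    p = valleyPoint Vdag (logRatio Vdag p.2) := by
  obtain ⟨hC, hV⟩ : 0 < p.1 ∧ p.2 < Vdag := hp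
  have hA := mul_sub_one_pos_of_neg (hV.trans hVd)
  have hsq : logRatio Vdag p.2 = p.1 ^ 2 := by
    by_contra hne
    have := mul_lt_mul_of_pos_left (exp_one_mul_lt_mul_exp_div (pow_pos hC 2) hne) hA
    rw [Hlwr_eq_mul_exp hVd hV, valleyValue, valleyV_logRatio hVd hV] at hle
    linarith
  ext
  · rw [valleyPoint, hsq, sqrt_sq hC.le]
  · exact (valleyV_logRatio hVd hV).symm

lemma isMinOn_valleyValue_of_isMinOn_Hlwr (hVd : Vdag < 0) {p : ℝ × ℝ}
    (hp : p ∈ Ioi 0 ×ˢ Iio Vdag) (hmin : IsMinOn (Hlwr Vdag) (Ioi 0 ×ˢ Iio Vdag) p) :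
    IsMinOn (valleyValue Vdag) (Ioi 0) (logRatio Vdag p.2) ∧
      p = valleyPoint Vdag (logRatio Vdag p.2) := by
  have hlow := exp_one_mul_valleyValue_logRatio_le_Hlwr hVd hp
  have hL := logRatio_pos hVd hp.2
  refine ⟨isMinOn_iff.2 fun x hx => ?_, eq_valleyPoint_of_Hlwr_le hVd hp ?_⟩
  · have := isMinOn_iff.1 hmin _ (valleyPoint_mem hVd hx)
    rw [Hlwr_valleyPoint hVd hx] at this
    exact le_of_mul_le_mul_left (hlow.trans this) (exp_pos 1)
  · have := isMinOn_iff.1 hmin _ (valleyPoint_mem hVd hL)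
    rwa [Hlwr_valleyPoint hVd hL] at this

lemma strictConvexOn_valleyValue (hVd : Vdag < 0) :
    StrictConvexOn ℝ (Ioi 0) (valleyValue Vdag) := by
  have : valleyValue Vdag = fun x =>
      Vdag ^ 2 * (x / (1 - exp (-x)) ^ 2) + -Vdag * (x / (1 - exp (-x)) ^ 1) := by
    funext x
    simp only [valleyValue, valleyV]
    generalize 1 - exp (-x) = u
    ring
  rw [this]
  exact ((strictConvexOn_div_one_sub_exp_neg_pow two_pos).const_mul (by nlinarith)).add
    ((strictConvexOn_div_one_sub_exp_neg_pow one_pos).const_mul (by linarith))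

lemma mul_sub_one_mul_logRatio_le_Hlwr (hVd : Vdag < 0) {p : ℝ × ℝ}
    (hp : p ∈ Ioi 0 ×ˢ Iio Vdag) : p.2 * (p.2 - 1) * logRatio Vdag p.2 ≤ Hlwr Vdag p := by
  have hlow := exp_one_mul_valleyValue_logRatio_le_Hlwr hVd hp
  rw [valleyValue, valleyV_logRatio hVd hp.2] at hlow
  have : 0 ≤ p.2 * (p.2 - 1) * logRatio Vdag p.2 :=
    mul_nonneg (mul_sub_one_pos_of_neg (hp.2.trans hVd)).le (logRatio_pos hVd hp.2).le
  exact (le_mul_of_one_le_left this (one_le_exp zero_le_one)).trans hlow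

lemma mul_logRatio_le_Hlwr (hVd : Vdag < 0) {p : ℝ × ℝ} (hp : p ∈ Ioi 0 ×ˢ Iio Vdag) :
    Vdag * (Vdag - 1) * logRatio Vdag p.2 ≤ Hlwr Vdag p := by
  have hV : p.2 < Vdag := hp.2
  have : Vdag * (Vdag - 1) ≤ p.2 * (p.2 - 1) := by nlinarith
  exact (mul_le_mul_of_nonneg_right this (logRatio_pos hVd hV).le).trans
    (mul_sub_one_mul_logRatio_le_Hlwr hVd hp)

lemma mul_le_Hlwr (hVd : Vdag < 0) {p : ℝ × ℝ} (hp : p ∈ Ioi 0 ×ˢ Iio Vdag) :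
    Vdag * p.2 ≤ Hlwr Vdag p := by
  have hV : p.2 < Vdag := hp.2
  have := mul_nonpos_of_nonneg_of_nonpos (sub_nonneg.2 (mul_logRatio_le hVd hV))
    (by linarith : p.2 - 1 ≤ 0)
  nlinarith [mul_sub_one_mul_logRatio_le_Hlwr hVd hp]

lemma mul_sq_le_Hlwr (hVd : Vdag < 0) {p : ℝ × ℝ} (hp : p ∈ Ioi 0 ×ˢ Iio Vdag) :
    Vdag * (Vdag - 1) * p.1 ^ 2 ≤ Hlwr Vdag p := by
  obtain ⟨hC, hV⟩ : 0 < p.1 ∧ p.2 < Vdag := hp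
  rw [Hlwr_eq_mul_exp hVd hV]
  have h1 : 1 ≤ exp (logRatio Vdag p.2 / p.1 ^ 2) :=
    one_le_exp (div_nonneg (logRatio_pos hVd hV).le (sq_nonneg _))
  have h2 : Vdag * (Vdag - 1) ≤ p.2 * (p.2 - 1) := by nlinarith
  calc Vdag * (Vdag - 1) * p.1 ^ 2 ≤ p.2 * (p.2 - 1) * p.1 ^ 2 := by gcongr
    _ ≤ _ := le_mul_of_one_le_right
      (mul_nonneg (mul_sub_one_pos_of_neg (hV.trans hVd)).le (sq_nonneg _)) h1

lemma sq_le_two_mul_sq_mul_Hlwr (hVd : Vdag < 0) {p : ℝ × ℝ} (hp : p ∈ Ioi 0 ×ˢ Iio Vdag) :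
    Vdag ^ 2 ≤ 2 * p.1 ^ 2 * Hlwr Vdag p := by
  obtain ⟨hC, hV⟩ : 0 < p.1 ∧ p.2 < Vdag := hp
  rw [Hlwr_eq_mul_exp hVd hV]
  set L := logRatio Vdag p.2
  have hVL : p.2 * L ≤ Vdag := mul_logRatio_le hVd hV
  have hA := mul_sub_one_pos_of_neg (hV.trans hVd)
  have := mul_le_mul_of_nonneg_left
    (sq_le_two_mul_sq_mul_exp_div (pow_pos hC 2) (logRatio_pos hVd hV).le) hA.le
  calc Vdag ^ 2 ≤ (p.2 * L) ^ 2 := by nlinarith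
    _ ≤ p.2 * (p.2 - 1) * L ^ 2 := by nlinarith [sq_nonneg L]
    _ ≤ p.2 * (p.2 - 1) * (2 * (p.1 ^ 2) ^ 2 * exp (L / p.1 ^ 2)) := this
    _ = _ := by ring

lemma exists_isCompact_forall_lt_Hlwr (hVd : Vdag < 0) {M : ℝ} (hM : 0 < M) :
    ∃ K : Set (ℝ × ℝ), IsCompact K ∧ K ⊆ Ioi 0 ×ˢ Iio Vdag ∧
      ∀ p ∈ (Ioi 0 ×ˢ Iio Vdag) \ K, M < Hlwr Vdag p := by
  have hA := mul_sub_one_pos_of_neg hVd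
  set a := M / (Vdag * (Vdag - 1))
  have ha : 0 < a := div_pos hM hA
  refine ⟨Icc √(Vdag ^ 2 / (2 * M)) √a ×ˢ Icc (M / Vdag) (valleyV Vdag a),
    isCompact_Icc.prod isCompact_Icc, fun p hp => ⟨?_, ?_⟩, ?_⟩
  · exact (sqrt_pos.2 (div_pos (by nlinarith) (by positivity))).trans_le hp.1.1
  · exact hp.2.2.trans_lt (valleyV_lt hVd ha)
  rintro p ⟨hp, hpK⟩
  have hC : 0 < p.1 := hp.1
  simp only [mem_prod, mem_Icc, not_and_or, not_le] at hpK
  rcases hpK with (h | h) | (h | h)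
  · rw [lt_sqrt hC.le, lt_div_iff₀ (by positivity)] at h
    nlinarith [sq_le_two_mul_sq_mul_Hlwr hVd hp, pow_pos hC 2]
  · rw [sqrt_lt' hC, div_lt_iff₀ hA] at h
    linarith [mul_sq_le_Hlwr hVd hp]
  · rw [lt_div_iff_of_neg hVd] at h
    linarith [mul_le_Hlwr hVd hp]
  · have := lt_logRatio_of_valleyV_lt hVd ha h hp.2
    rw [div_lt_iff₀ hA] at this
    linarith [mul_logRatio_le_Hlwr hVd hp]

end

/-- Fix `V† < 0`. The function `H_lwr` tends to infinity toward the boundary of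
its domain `(0, ∞) × (−∞, V†)` (for every `M > 0` it exceeds `M` outside some
compact subset of the domain), and it attains its global minimum on the domain
at exactly one point. -/
theorem Hlwr_proper_and_unique_min
    (Vdag : ℝ) (hVd : Vdag < 0)
    (H : ℝ × ℝ → ℝ)
    (hH : ∀ p : ℝ × ℝ, H p =
      p.2 * (p.2 - 1) * p.1 ^ 2 * (-p.2 / (Vdag - p.2)) ^ (1 / p.1 ^ 2)) :
    (∀ M : ℝ, 0 < M → ∃ K : Set (ℝ × ℝ), IsCompact K ∧
      K ⊆ Set.Ioi 0 ×ˢ Set.Iio Vdag ∧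
      ∀ p ∈ (Set.Ioi 0 ×ˢ Set.Iio Vdag) \ K, M < H p) ∧
    (∃! p : ℝ × ℝ, p ∈ Set.Ioi (0:ℝ) ×ˢ Set.Iio Vdag ∧
      ∀ q ∈ Set.Ioi (0:ℝ) ×ˢ Set.Iio Vdag, H p ≤ H q) := by
  obtain rfl : H = Hlwr Vdag := funext hH
  refine ⟨fun M hM => exists_isCompact_forall_lt_Hlwr hVd hM, ?_⟩
  have hp₀ := valleyPoint_mem hVd one_pos
  obtain ⟨K, hK, hKD, hlt⟩ := exists_isCompact_forall_lt_Hlwr hVd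
    ((mul_pos (mul_sub_one_pos_of_neg hVd) (pow_pos hp₀.1 2)).trans_le (mul_sq_le_Hlwr hVd hp₀))
  obtain ⟨p, hp, hmin⟩ := (continuousOn_Hlwr Vdag).exists_isMinOn_of_le_off_compact hp₀ hK hKD
    fun q hq => (hlt q hq).le
  refine ⟨p, ⟨hp, isMinOn_iff.1 hmin⟩, fun q ⟨hq, hqmin⟩ => ?_⟩
  obtain ⟨hLq, hq_eq⟩ := isMinOn_valleyValue_of_isMinOn_Hlwr hVd hq (isMinOn_iff.2 hqmin)
  obtain ⟨hLp, hp_eq⟩ := isMinOn_valleyValue_of_isMinOn_Hlwr hVd hp hmin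
  rw [hq_eq, hp_eq, (strictConvexOn_valleyValue hVd).eq_of_isMinOn hLq hLp
    (logRatio_pos hVd hq.2) (logRatio_pos hVd hp.2)]
end

section
/- Fix V_dagger < 0 and V_alpha < V_dagger, set L = ln(−V_alpha/(V_dagger − V_alpha)) and C* = √L, and for g > e·V_alpha(V_alpha − 1)·L let C_slow(g) denote the unique solution in (0, C*) of H_lwr(C, V_alpha) = g. Then C_slow(g)² · ln g → L as g → ∞. -/
/-!
Write `x = C_slow(g)²` and `A = Vα(Vα − 1)`. The equation `H_lwr = g` reads `g = A x e^{L/x}`, so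
`x log g = x log A + x log x + L`. Since `0 < x < L`, taking logarithms gives
`L/x ≥ log g − log A − log L → ∞`, hence `x → 0⁺`, and then `x log A + x log x → 0`.
-/

open Filter Real Set Topology

lemma log_mul_mul_exp_div {A x L : ℝ} (hA : 0 < A) (hx : 0 < x) :
    log (A * x * exp (L / x)) = log A + log x + L / x := by
  rw [log_mul (by positivity) (exp_pos _).ne', log_mul hA.ne' hx.ne', log_exp]

section

variable {α : Type*} {l : Filter α} {A L : ℝ} {x g : α → ℝ}

lemma tendsto_nhdsGT_zero_of_eq_mul_exp_div (hA : 0 < A) (hL : 0 < L)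
    (hg : Tendsto g l atTop)
    (hxg : ∀ᶠ a in l, x a ∈ Ioc 0 L ∧ g a = A * x a * exp (L / x a)) :
    Tendsto x l (𝓝[>] 0) := by
  have hLx : Tendsto (fun a => L / x a) l atTop := by
    refine tendsto_atTop_mono' l ?_
      (tendsto_atTop_add_const_right l (-(log A + log L)) (tendsto_log_atTop.comp hg))
    filter_upwards [hxg] with a ⟨⟨hx0, hxL⟩, hga⟩
    have : log (x a) ≤ log L := log_le_log hx0 hxL
    simp only [Function.comp_apply, hga, log_mul_mul_exp_div hA hx0]
    linarith
  have hx : Tendsto x l (𝓝 0) := by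
    have h := hLx.inv_tendsto_atTop.mul_const L
    rw [zero_mul] at h
    refine h.congr' ?_
    filter_upwards [hxg] with a ⟨⟨hx0, _⟩, _⟩
    rw [Pi.inv_apply, inv_div]
    field_simp
  exact tendsto_nhdsWithin_iff.2 ⟨hx, hxg.mono fun a ha => ha.1.1⟩

lemma tendsto_mul_log_of_eq_mul_exp_div (hA : 0 < A) (hL : 0 < L)
    (hg : Tendsto g l atTop)
    (hxg : ∀ᶠ a in l, x a ∈ Ioc 0 L ∧ g a = A * x a * exp (L / x a)) :
    Tendsto (fun a => x a * log (g a)) l (𝓝 L) := by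
  have hx := tendsto_nhdsGT_zero_of_eq_mul_exp_div hA hL hg hxg
  have hxlogx : Tendsto (fun a => log (x a) * x a) l (𝓝 0) := by
    simpa only [rpow_one, Function.comp_def] using
      (tendsto_log_mul_rpow_nhdsGT_zero zero_lt_one).comp hx
  have hlim := ((tendsto_nhds_of_tendsto_nhdsWithin hx).mul_const (log A)).add hxlogx
    |>.add_const L
  rw [zero_mul, zero_add, zero_add] at hlim
  refine hlim.congr' ?_
  filter_upwards [hxg] with a ⟨⟨hx0, _⟩, hga⟩
  rw [hga, log_mul_mul_exp_div hA hx0]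
  field_simp

end

/-- Fix `V† < 0`, `Vα < V†`, `L = ln(−Vα/(V† − Vα))`, `C* = √L`, and for
`g > e·Vα(Vα − 1)·L` let `C_slow(g)` be the unique solution in `(0, C*)` of
`H_lwr(C, Vα) = g`. Then `C_slow(g)²·ln g → L` as `g → ∞`. -/
theorem Cslow_asymptotics
    (Vdag Valpha : ℝ) (hVd : Vdag < 0) (hVa : Valpha < Vdag)
    (L : ℝ) (hL : L = Real.log (-Valpha / (Vdag - Valpha)))
    (H : ℝ → ℝ)
    (hH : ∀ C : ℝ, H C =
      Valpha * (Valpha - 1) * C ^ 2 * (-Valpha / (Vdag - Valpha)) ^ (1 / C ^ 2))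
    (Cslow : ℝ → ℝ)
    (hCs : ∀ g : ℝ, Real.exp 1 * (Valpha * (Valpha - 1)) * L < g →
      Cslow g ∈ Set.Ioo 0 (Real.sqrt L) ∧ H (Cslow g) = g) :
    Filter.Tendsto (fun g : ℝ => (Cslow g) ^ 2 * Real.log g)
      Filter.atTop (nhds L) := by
  have hA : 0 < Valpha * (Valpha - 1) := mul_pos_of_neg_of_neg (by linarith) (by linarith)
  have hbase : 1 < -Valpha / (Vdag - Valpha) := by
    rw [one_lt_div (by linarith)]
    linarith
  have hL0 : 0 < L := hL ▸ log_pos hbase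
  refine tendsto_mul_log_of_eq_mul_exp_div (x := fun g => Cslow g ^ 2) hA hL0 tendsto_id ?_
  filter_upwards [eventually_gt_atTop (exp 1 * (Valpha * (Valpha - 1)) * L)] with g hg
  obtain ⟨⟨hpos, hlt⟩, hHg⟩ := hCs g hg
  refine ⟨⟨pow_pos hpos 2, ((lt_sqrt hpos.le).1 hlt).le⟩, ?_⟩
  rw [hH, rpow_def_of_pos (by linarith), ← hL, mul_one_div] at hHg
  exact hHg.symm
end

section
/- Let C > 0, g > 0 and z† ∈ ℝ. Suppose w : (0, ∞) → ℝ is twice differentiable and satisfies the modified Bessel equation of order C², namely s² w''(s) + s w'(s) − (C⁴ + s²) w(s) = 0 for all s > 0. Define s(ζ) = 2C√g · e^{(z† − ζ)/2} and V(ζ) = 1 + e^{C²ζ/2} · w(s(ζ)) for ζ ∈ ℝ. Then V is twice differentiable on ℝ and satisfies (1/C²) V''(ζ) − V'(ζ) + g (1 − V(ζ)) e^{z† − ζ} = 0 for all ζ ∈ ℝ. -/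
/-! The substitution `s(ζ) = 2C√g e^{(z† − ζ)/2}` satisfies `s' = −s/2`, so for `W = w ∘ s` the
chain rule gives `4 W'' = s² w''(s) + s w'(s)`, while `g e^{z† − ζ} = s² / (4C²)`. Writing
`V = 1 + e^{C²ζ/2} W`, the exponent `C²/2` is chosen so that the first-order terms cancel:
`(1/C²) V'' − V' + g (1 − V) e^{z† − ζ} = e^{C²ζ/2} (4 W'' − (C⁴ + s²) W) / (4C²)`,
which is a multiple of the Bessel expression at `s(ζ)`. -/

open Real

section EulerSubstitution

variable {w σ : ℝ → ℝ} {κ : ℝ}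

theorem hasDerivAt_comp_of_hasDerivAt_eq_mul_self (hσ : ∀ ζ, HasDerivAt σ (κ * σ ζ) ζ)
    {ζ : ℝ} (hw : DifferentiableAt ℝ w (σ ζ)) :
    HasDerivAt (w ∘ σ) (κ * (σ ζ * deriv w (σ ζ))) ζ :=
  (hw.hasDerivAt.comp ζ (hσ ζ)).congr_deriv (by ring)

theorem hasDerivAt_deriv_comp_of_hasDerivAt_eq_mul_self (hσ : ∀ ζ, HasDerivAt σ (κ * σ ζ) ζ)
    (hw : ∀ ζ, DifferentiableAt ℝ w (σ ζ)) (hw' : ∀ ζ, DifferentiableAt ℝ (deriv w) (σ ζ))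
    (ζ : ℝ) :
    HasDerivAt (deriv (w ∘ σ))
      (κ ^ 2 * (σ ζ ^ 2 * deriv (deriv w) (σ ζ) + σ ζ * deriv w (σ ζ))) ζ := by
  have hderiv : deriv (w ∘ σ) = fun x => κ * (σ x * (deriv w ∘ σ) x) :=
    funext fun x => (hasDerivAt_comp_of_hasDerivAt_eq_mul_self hσ (hw x)).deriv
  rw [hderiv]
  exact (((hσ ζ).mul (hasDerivAt_comp_of_hasDerivAt_eq_mul_self hσ (hw' ζ))).const_mul κ
    ).congr_deriv (by simp only [Function.comp_apply]; ring)

end EulerSubstitution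

theorem hasDerivAt_exp_mul_mul {W : ℝ → ℝ} {W' c ζ : ℝ} (hW : HasDerivAt W W' ζ) :
    HasDerivAt (fun x => exp (c * x) * W x) (exp (c * ζ) * (c * W ζ + W')) ζ :=
  (((hasDerivAt_id ζ).const_mul c).exp.mul hW).congr_deriv (by simp only [id, mul_one]; ring)

theorem hasDerivAt_mul_exp_sub_div_two (a z ζ : ℝ) :
    HasDerivAt (fun x => a * exp ((z - x) / 2)) (-(1 / 2) * (a * exp ((z - ζ) / 2))) ζ :=
  ((((hasDerivAt_id ζ).const_sub z).div_const 2).exp.const_mul a).congr_deriv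
    (by simp only [id]; ring)

theorem sq_mul_sqrt_mul_exp_half {g : ℝ} (hg : 0 ≤ g) (a x : ℝ) :
    (a * √g * exp (x / 2)) ^ 2 = a ^ 2 * g * exp x := by
  rw [mul_pow, mul_pow, sq_sqrt hg, ← exp_nat_mul]
  push_cast
  ring_nf

/-- If `w` solves the modified Bessel equation of order `C²` on `(0, ∞)`, then
`V(ζ) = 1 + e^{C²ζ/2} w(2C√g e^{(z† − ζ)/2})` is twice differentiable and
solves `(1/C²)V'' − V' + g(1 − V)e^{z† − ζ} = 0` on `ℝ`. -/
theorem bessel_substitution_solves_front_equation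
    (C g zdag : ℝ) (hC : 0 < C) (hg : 0 < g)
    (w : ℝ → ℝ)
    (hw1 : ∀ s : ℝ, 0 < s → DifferentiableAt ℝ w s)
    (hw2 : ∀ s : ℝ, 0 < s → DifferentiableAt ℝ (deriv w) s)
    (hode : ∀ s : ℝ, 0 < s →
      s ^ 2 * deriv (deriv w) s + s * deriv w s - (C ^ 4 + s ^ 2) * w s = 0)
    (V : ℝ → ℝ)
    (hV : ∀ ζ : ℝ, V ζ =
      1 + Real.exp (C ^ 2 * ζ / 2) *
        w (2 * C * Real.sqrt g * Real.exp ((zdag - ζ) / 2))) :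
    (∀ ζ : ℝ, DifferentiableAt ℝ V ζ) ∧
    (∀ ζ : ℝ, DifferentiableAt ℝ (deriv V) ζ) ∧
    (∀ ζ : ℝ,
      (1 / C ^ 2) * deriv (deriv V) ζ - deriv V ζ +
        g * (1 - V ζ) * Real.exp (zdag - ζ) = 0) := by
  set σ : ℝ → ℝ := fun ζ => 2 * C * √g * exp ((zdag - ζ) / 2)
  have hσ_pos : ∀ ζ, 0 < σ ζ := fun ζ => by have := sqrt_pos.2 hg; positivity
  have hσ := hasDerivAt_mul_exp_sub_div_two (2 * C * √g) zdag
  have hwσ : ∀ ζ, DifferentiableAt ℝ w (σ ζ) := fun ζ => hw1 _ (hσ_pos ζ)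
  have hW := fun ζ => hasDerivAt_comp_of_hasDerivAt_eq_mul_self hσ (hwσ ζ)
  have hW' := hasDerivAt_deriv_comp_of_hasDerivAt_eq_mul_self hσ hwσ (fun ζ => hw2 _ (hσ_pos ζ))
  have hV_eq : V = fun ζ => 1 + exp (C ^ 2 / 2 * ζ) * (w ∘ σ) ζ :=
    funext fun ζ => by rw [hV, mul_div_right_comm]; rfl
  have hV' : ∀ ζ, HasDerivAt V
      (exp (C ^ 2 / 2 * ζ) * (C ^ 2 / 2 * (w ∘ σ) ζ + deriv (w ∘ σ) ζ)) ζ := fun ζ =>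
    hV_eq ▸ (hasDerivAt_exp_mul_mul (hW ζ).differentiableAt.hasDerivAt).const_add 1
  have hV'' : ∀ ζ, HasDerivAt (deriv V) (exp (C ^ 2 / 2 * ζ) *
      (C ^ 2 / 2 * (C ^ 2 / 2 * (w ∘ σ) ζ + deriv (w ∘ σ) ζ) + (C ^ 2 / 2 * deriv (w ∘ σ) ζ +
        (-(1 / 2)) ^ 2 * (σ ζ ^ 2 * deriv (deriv w) (σ ζ) + σ ζ * deriv w (σ ζ))))) ζ := by
    intro ζ
    rw [funext fun x => (hV' x).deriv]
    exact hasDerivAt_exp_mul_mul (((hW ζ).differentiableAt.hasDerivAt.const_mul _).add (hW' ζ))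
  refine ⟨fun ζ => (hV' ζ).differentiableAt, fun ζ => (hV'' ζ).differentiableAt, fun ζ => ?_⟩
  rw [(hV'' ζ).deriv, (hV' ζ).deriv, hV_eq, (hW ζ).deriv]
  have hσ_sq := sq_mul_sqrt_mul_exp_half hg.le (2 * C) (zdag - ζ)
  simp only [Function.comp_apply]
  field_simp
  linear_combination exp (C ^ 2 * ζ / 2) * (hode _ (hσ_pos ζ) + w (σ ζ) * hσ_sq)
end
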